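/- arXiv:1503.05401 — 10 statements merged into one kernel-verified Lean document; each statement's English description precedes it below -/
import Mathlib

section
/- For polynomials h_i, h_j ∈ K[x] over a field K, K(h_i) = K(h_j) as subfields of K(x) if and only if there exists a polynomial ℓ ∈ K[x] of degree 1 such that h_i = ℓ ∘ h_j. -/
open Polynomial

private lemma comp_ne_zero_aux {K : Type*} [Field K] {d h : K[X]} (hd : d ≠ 0)
    (hh : 0 < h.natDegree) : d.comp h ≠ 0 := by
  rw [Ne, comp_eq_zero_iff]
  rintro (rfl | ⟨-, hC⟩)
  · exact hd rfl
  · rw [hC, natDegree_C] at hh; exact lt_irrefl 0 hh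

set_option maxHeartbeats 1000000 in
private lemma exists_comp_of_mem_adjoin {K : Type*} [Field K] {h₁ h₂ : K[X]}
    (hh₁ : h₁ ≠ 0) (hh₂ : 0 < h₂.natDegree)
    (hmem : algebraMap K[X] (RatFunc K) h₁ ∈
      IntermediateField.adjoin K {algebraMap K[X] (RatFunc K) h₂}) :
    ∃ g : K[X], h₁ = g.comp h₂ := by
  classical
  set φ := algebraMap K[X] (RatFunc K) with hφ
  have hinj : Function.Injective φ := IsFractionRing.injective K[X] (RatFunc K)
  obtain ⟨r, s, hrs⟩ := (IntermediateField.mem_adjoin_simple_iff K _).mp hmem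
  have haev : ∀ p : K[X], aeval (φ h₂) p = φ (p.comp h₂) := by
    intro p
    rw [show φ h₂ = (algebraMap K[X] (RatFunc K)) h₂ from rfl,
      aeval_algebraMap_apply]
    rfl
  rw [haev r, haev s] at hrs
  have hs0 : φ (s.comp h₂) ≠ 0 := by
    intro h0
    rw [h0, div_zero] at hrs
    exact hh₁ (hinj (by rw [hrs, map_zero]))
  have hcross : h₁ * s.comp h₂ = r.comp h₂ := by
    apply hinj
    rw [map_mul, hrs, div_mul_cancel₀ _ hs0]
  have hs : s ≠ 0 := by
    rintro rfl
    exact hs0 (by rw [zero_comp, map_zero])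
  obtain ⟨d, r₁, s₁, hd, hrd, hsd, hcop⟩ :
      ∃ d r₁ s₁ : K[X], d ≠ 0 ∧ r = d * r₁ ∧ s = d * s₁ ∧ IsCoprime r₁ s₁ := by
    obtain ⟨r₁, hr⟩ := EuclideanDomain.gcd_dvd_left r s
    obtain ⟨s₁, hs'⟩ := EuclideanDomain.gcd_dvd_right r s
    have hd : EuclideanDomain.gcd r s ≠ 0 := fun h => hs (EuclideanDomain.gcd_eq_zero_iff.mp h).2
    have hbez := EuclideanDomain.gcd_eq_gcd_ab r s
    refine ⟨_, r₁, s₁, hd, hr, hs', ⟨EuclideanDomain.gcdA r s, EuclideanDomain.gcdB r s, ?_⟩⟩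
    apply mul_left_cancel₀ hd
    linear_combination (-1 : K[X]) * hbez - EuclideanDomain.gcdA r s * hr
      - EuclideanDomain.gcdB r s * hs'
  have hdc : d.comp h₂ ≠ 0 := comp_ne_zero_aux hd hh₂
  have hcross₁ : h₁ * s₁.comp h₂ = r₁.comp h₂ := by
    apply mul_left_cancel₀ hdc
    rw [hrd, hsd] at hcross
    simp only [mul_comp] at hcross
    rw [← hcross]
    ring
  have hcopc : IsCoprime (r₁.comp h₂) (s₁.comp h₂) := by
    obtain ⟨u, v, huv⟩ := hcop
    have h1 : (u * r₁ + v * s₁).comp h₂ = (1 : K[X]).comp h₂ := by rw [huv]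
    simp only [add_comp, mul_comp, one_comp] at h1
    exact ⟨u.comp h₂, v.comp h₂, h1⟩
  have hdvd : s₁.comp h₂ ∣ r₁.comp h₂ := ⟨h₁, by rw [← hcross₁, mul_comm]⟩
  have hunit : IsUnit (s₁.comp h₂) := hcopc.isUnit_of_dvd' hdvd dvd_rfl
  obtain ⟨c, hc, hcs⟩ := Polynomial.isUnit_iff.mp hunit
  have hc0 : c ≠ 0 := hc.ne_zero
  refine ⟨C c⁻¹ * r₁, ?_⟩
  rw [mul_comp, C_comp, ← hcross₁, ← hcs]
  rw [← mul_assoc, mul_comm (C c⁻¹) h₁, mul_assoc, ← C_mul, inv_mul_cancel₀ hc0, C_1, mul_one]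

theorem adjoin_eq_iff_linear_comp {K : Type*} [Field K] (h₁ h₂ : K[X])
    (hh₁ : 0 < h₁.natDegree) (hh₂ : 0 < h₂.natDegree) :
    IntermediateField.adjoin K {algebraMap K[X] (RatFunc K) h₁} =
      IntermediateField.adjoin K {algebraMap K[X] (RatFunc K) h₂} ↔
    ∃ ℓ : K[X], ℓ.natDegree = 1 ∧ h₁ = ℓ.comp h₂ := by
  have hinj : Function.Injective (algebraMap K[X] (RatFunc K)) :=
    IsFractionRing.injective K[X] (RatFunc K)
  constructor
  · intro heq
    have h₁ne : h₁ ≠ 0 := fun h => by simp [h] at hh₁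
    have h₂ne : h₂ ≠ 0 := fun h => by simp [h] at hh₂
    have m₁ : algebraMap K[X] (RatFunc K) h₁ ∈
        IntermediateField.adjoin K {algebraMap K[X] (RatFunc K) h₂} := by
      rw [← heq]; exact IntermediateField.mem_adjoin_simple_self K _
    have m₂ : algebraMap K[X] (RatFunc K) h₂ ∈
        IntermediateField.adjoin K {algebraMap K[X] (RatFunc K) h₁} := by
      rw [heq]; exact IntermediateField.mem_adjoin_simple_self K _
    obtain ⟨g, hg⟩ := exists_comp_of_mem_adjoin h₁ne hh₂ m₁
    obtain ⟨g₂, hg₂⟩ := exists_comp_of_mem_adjoin h₂ne hh₁ m₂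
    have hdeg : h₁.natDegree = g.natDegree * h₂.natDegree := by rw [hg, natDegree_comp]
    have hdeg₂ : h₂.natDegree = g₂.natDegree * h₁.natDegree := by rw [hg₂, natDegree_comp]
    have hmm : (g₂.natDegree * g.natDegree) * h₂.natDegree = 1 * h₂.natDegree := by
      rw [one_mul, mul_assoc, ← hdeg, ← hdeg₂]
    have hone : g₂.natDegree * g.natDegree = 1 := Nat.eq_of_mul_eq_mul_right hh₂ hmm
    exact ⟨g, Nat.eq_one_of_mul_eq_one_left hone, hg⟩
  · rintro ⟨ℓ, hℓ, rfl⟩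
    have hℓ' : ℓ = C (ℓ.coeff 1) * X + C (ℓ.coeff 0) :=
      eq_X_add_C_of_natDegree_le_one hℓ.le
    set a := ℓ.coeff 1 with haa
    set b := ℓ.coeff 0 with hbb
    have ha : a ≠ 0 := by
      have hℓ0 : ℓ ≠ 0 := fun h => by rw [h, natDegree_zero] at hℓ; exact one_ne_zero hℓ.symm
      have := leadingCoeff_ne_zero.mpr hℓ0
      rwa [leadingCoeff, hℓ] at this
    have hcomp : ℓ.comp h₂ = C a * h₂ + C b := by
      conv_lhs => rw [hℓ']
      simp [add_comp, mul_comp]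
    have himg : algebraMap K[X] (RatFunc K) (ℓ.comp h₂) =
        algebraMap K (RatFunc K) a * algebraMap K[X] (RatFunc K) h₂
          + algebraMap K (RatFunc K) b := by
      rw [hcomp, map_add, map_mul, RatFunc.algebraMap_C, RatFunc.algebraMap_C,
        RatFunc.algebraMap_eq_C]
    apply le_antisymm
    · rw [IntermediateField.adjoin_le_iff, Set.singleton_subset_iff]
      rw [SetLike.mem_coe, himg]
      exact add_mem (mul_mem (IntermediateField.algebraMap_mem _ a)
        (IntermediateField.mem_adjoin_simple_self K _))
        (IntermediateField.algebraMap_mem _ b)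
    · rw [IntermediateField.adjoin_le_iff, Set.singleton_subset_iff]
      rw [SetLike.mem_coe]
      have key : algebraMap K[X] (RatFunc K) h₂ =
          (algebraMap K (RatFunc K) a)⁻¹ *
            (algebraMap K[X] (RatFunc K) (ℓ.comp h₂) - algebraMap K (RatFunc K) b) := by
        have ha' : algebraMap K (RatFunc K) a ≠ 0 := by
          simpa using ha
        rw [himg, add_sub_cancel_right, ← mul_assoc, inv_mul_cancel₀ ha', one_mul]
      rw [key]
      exact mul_mem (inv_mem (IntermediateField.algebraMap_mem _ a))
        (sub_mem (IntermediateField.mem_adjoin_simple_self K _)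
          (IntermediateField.algebraMap_mem _ b))
end

section
/- Let f ∈ ℚ[x] be monic and decomposable, written as f = g ∘ h with g, h ∈ ℂ[x] both monic, deg g ≥ 2, deg h ≥ 2, and h(0) = 0. Then g and h have rational coefficients: g, h ∈ ℚ[x]. -/
/-!
Let `m = deg g` and `n = deg h`. Above degree `(m - 1) n` the composition `g ∘ h` agrees with
`h ^ m`, and for `0 < j < n` the coefficient of `X ^ ((m - 1) n + j)` in `h ^ m` is `m • h_j` plus
a polynomial expression in `h_(j+1), …, h_n`. As `m` is invertible, a downward induction on `j`
puts every coefficient of `h` in `ℚ` (with `h_0 = 0` by normalisation). Once `h ∈ ℚ[X]` is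
nonconstant, the leading coefficient of `g ∘ h` gives that of `g`; removing the leading term of
`g` and recursing on the degree gives `g ∈ ℚ[X]`.
-/

open Polynomial

namespace Polynomial

theorem coeff_comp_eq_leadingCoeff_mul_coeff_pow {R : Type*} [Semiring R] {g h : R[X]} {k : ℕ}
    (hk : (g.natDegree - 1) * h.natDegree < k) :
    (g.comp h).coeff k = g.leadingCoeff * (h ^ g.natDegree).coeff k := by
  have hlow : (g.eraseLead.comp h).coeff k = 0 :=
    coeff_eq_zero_of_natDegree_lt <| natDegree_comp_le.trans_lt <|
      (Nat.mul_le_mul_right _ (eraseLead_natDegree_le g)).trans_lt hk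
  conv_lhs => rw [← eraseLead_add_C_mul_X_pow g]
  rw [add_comp, coeff_add, hlow, zero_add, C_mul_comp, X_pow_comp, coeff_C_mul]

theorem coeff_add_pow_of_natDegree_le {R : Type*} [CommRing R] {p r : R[X]} {j : ℕ}
    (hp : p.Monic) (hr : r.natDegree ≤ j) (hj : j < p.natDegree) (m : ℕ) :
    ((p + r) ^ m).coeff ((m - 1) * p.natDegree + j) =
      (p ^ m).coeff ((m - 1) * p.natDegree + j) + m * r.coeff j := by
  set n := p.natDegree
  have hrp : r.natDegree < n := hr.trans_lt hj
  have hq : (p + r).Monic := hp.add_of_left (degree_lt_degree hrp)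
  have hqn : (p + r).natDegree = n := natDegree_add_eq_left_of_natDegree_lt hrp
  set S := ∑ i ∈ Finset.range m, (p + r) ^ i * p ^ (m - 1 - i)
  have hterm : ∀ i ∈ Finset.range m, ((p + r) ^ i * p ^ (m - 1 - i)).Monic ∧
      ((p + r) ^ i * p ^ (m - 1 - i)).natDegree = (m - 1) * n := by
    intro i hi
    have him : i < m := Finset.mem_range.1 hi
    refine ⟨(hq.pow i).mul (hp.pow _), ?_⟩
    rw [(hq.pow i).natDegree_mul (hp.pow _), hq.natDegree_pow, hp.natDegree_pow, hqn, ← add_mul]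
    congr 1
    omega
  have hS : S.natDegree ≤ (m - 1) * n :=
    natDegree_sum_le_of_forall_le _ _ fun i hi => (hterm i hi).2.le
  have hSlead : S.coeff ((m - 1) * n) = m := by
    rw [finsetSum_coeff,
      Finset.sum_congr rfl fun i hi => (hterm i hi).2 ▸ (hterm i hi).1.coeff_natDegree]
    simp
  have hgeom : (p + r) ^ m = p ^ m + S * r := by
    have := geom_sum₂_mul (p + r) p m
    rw [add_sub_cancel_left] at this
    linear_combination -this
  rw [hgeom, coeff_add, coeff_mul_add_eq_of_natDegree_le hS hr, hSlead]

section Lifts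

variable {K L : Type*} [Field K] [Field L] (φ : K →+* L)

theorem coeff_mem_fieldRange {p : L[X]} (hp : p ∈ liftsRing φ) (n : ℕ) :
    p.coeff n ∈ φ.fieldRange :=
  (lifts_iff_coeff_lifts p).1 ((lifts_iff_liftsRing φ p).2 hp) n

theorem C_mem_liftsRing {x : L} (hx : x ∈ φ.fieldRange) : C x ∈ liftsRing φ :=
  (lifts_iff_liftsRing φ _).1 (C'_mem_lifts hx)

theorem monomial_mem_liftsRing (n : ℕ) {x : L} (hx : x ∈ φ.fieldRange) :
    monomial n x ∈ liftsRing φ :=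
  (lifts_iff_liftsRing φ _).1 (monomial_mem_lifts n hx)

theorem coeff_sub_mem_fieldRange_of_comp_mem_liftsRing {g h p : L[X]} (hg : g.Monic)
    (hm : (g.natDegree : L) ≠ 0) (hh : h.Monic) (hgh : g.comp h ∈ liftsRing φ)
    (hp : p ∈ liftsRing φ) {j : ℕ} (hj0 : 0 < j) (hjn : j < h.natDegree)
    (hr : (h - p).natDegree ≤ j) : (h - p).coeff j ∈ φ.fieldRange := by
  have hlt : (h - p).natDegree < h.natDegree := hr.trans_lt hjn
  have hpn : p.natDegree = h.natDegree := by
    simpa using natDegree_sub_eq_left_of_natDegree_lt hlt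
  have hpm : p.Monic := by simpa using hh.sub_of_left (degree_lt_degree hlt)
  set N := (g.natDegree - 1) * h.natDegree + j
  have hcoeff :
      (g.comp h).coeff N = (p ^ g.natDegree).coeff N + g.natDegree * (h - p).coeff j := by
    have hpow := coeff_add_pow_of_natDegree_le hpm hr (by rwa [hpn]) g.natDegree
    rw [add_sub_cancel, hpn] at hpow
    rw [coeff_comp_eq_leadingCoeff_mul_coeff_pow (by omega), hg.leadingCoeff, one_mul, hpow]
  have hsolve :
      (h - p).coeff j = ((g.comp h).coeff N - (p ^ g.natDegree).coeff N) / g.natDegree := by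
    rw [hcoeff]
    field_simp
    ring
  rw [hsolve]
  exact div_mem (sub_mem (coeff_mem_fieldRange φ hgh N)
    (coeff_mem_fieldRange φ (pow_mem hp _) N)) (natCast_mem _ _)

theorem exists_mem_liftsRing_natDegree_sub_le_of_comp_mem_liftsRing {g h : L[X]} (hg : g.Monic)
    (hm : (g.natDegree : L) ≠ 0) (hh : h.Monic) (hgh : g.comp h ∈ liftsRing φ) {j : ℕ}
    (hj : j ≤ h.natDegree - 1) : ∃ p ∈ liftsRing φ, (h - p).natDegree ≤ j := by
  induction hj using Nat.decreasingInduction with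
  | self =>
    refine ⟨X ^ h.natDegree, (lifts_iff_liftsRing φ _).1 (X_pow_mem_lifts φ _), ?_⟩
    rw [← one_mul (X ^ h.natDegree), ← C_1, ← hh.leadingCoeff, self_sub_C_mul_X_pow]
    exact eraseLead_natDegree_le h
  | of_succ k hk ih =>
    obtain ⟨p, hp, hr⟩ := ih
    have hc := coeff_sub_mem_fieldRange_of_comp_mem_liftsRing φ hg hm hh hgh hp k.succ_pos
      (by omega) hr
    refine ⟨p + monomial (k + 1) ((h - p).coeff (k + 1)),
      add_mem hp (monomial_mem_liftsRing φ _ hc), ?_⟩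
    rw [natDegree_le_iff_coeff_eq_zero]
    intro i hi
    rw [← sub_sub, coeff_sub, coeff_monomial]
    rcases (Nat.succ_le_of_lt hi).eq_or_lt with rfl | hlt
    · simp
    · rw [if_neg hlt.ne, coeff_eq_zero_of_natDegree_lt (hr.trans_lt hlt), sub_zero]

theorem mem_liftsRing_of_comp_mem_liftsRing_right {g h : L[X]} (hg : g.Monic)
    (hm : (g.natDegree : L) ≠ 0) (hh : h.Monic) (hh0 : h.coeff 0 = 0)
    (hgh : g.comp h ∈ liftsRing φ) : h ∈ liftsRing φ := by
  obtain ⟨p, hp, hr⟩ :=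
    exists_mem_liftsRing_natDegree_sub_le_of_comp_mem_liftsRing φ hg hm hh hgh (Nat.zero_le _)
  have hsplit : h = p + C (-p.coeff 0) := by
    conv_lhs => rw [← add_sub_cancel p h, eq_C_of_natDegree_le_zero hr]
    simp [hh0]
  rw [hsplit]
  exact add_mem hp (C_mem_liftsRing φ (neg_mem (coeff_mem_fieldRange φ hp 0)))

theorem mem_liftsRing_of_comp_mem_liftsRing_left {h : L[X]} (hh : h ∈ liftsRing φ)
    (hn : h.natDegree ≠ 0) {g : L[X]} (hgh : g.comp h ∈ liftsRing φ) : g ∈ liftsRing φ := by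
  have hh_lead : h.leadingCoeff ≠ 0 :=
    leadingCoeff_ne_zero.2 (ne_zero_of_natDegree_gt (Nat.pos_of_ne_zero hn))
  induction hN : g.natDegree using Nat.strong_induction_on generalizing g with
  | _ N ih =>
    have hlead : g.leadingCoeff ∈ φ.fieldRange := by
      have hcomp := coeff_mem_fieldRange φ hgh (g.comp h).natDegree
      rw [← leadingCoeff, leadingCoeff_comp hn] at hcomp
      rw [← mul_div_cancel_right₀ g.leadingCoeff (pow_ne_zero g.natDegree hh_lead)]
      exact div_mem hcomp (pow_mem (coeff_mem_fieldRange φ hh _) _)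
    have hmono : C g.leadingCoeff * X ^ g.natDegree ∈ liftsRing φ := by
      rw [C_mul_X_pow_eq_monomial]
      exact monomial_mem_liftsRing φ _ hlead
    have hrest : g.eraseLead.comp h ∈ liftsRing φ := by
      rw [← self_sub_C_mul_X_pow, sub_comp, C_mul_comp, X_pow_comp]
      exact sub_mem hgh (mul_mem (C_mem_liftsRing φ hlead) (pow_mem hh _))
    rw [← eraseLead_add_C_mul_X_pow g]
    refine add_mem ?_ hmono
    rcases eraseLead_natDegree_lt_or_eraseLead_eq_zero g with hlt | h0
    · exact ih _ (hN ▸ hlt) hrest rfl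
    · rw [h0]
      exact zero_mem _

end Lifts

end Polynomial

theorem rational_coeffs_of_monic_decomposition_general (f : ℚ[X])
    (g h : Polynomial ℂ) (hg : g.Monic) (hh : h.Monic)
    (hdg : 2 ≤ g.natDegree) (hdh : 2 ≤ h.natDegree) (hh0 : h.eval 0 = 0)
    (hcomp : f.map (algebraMap ℚ ℂ) = g.comp h) :
    (∃ g' : ℚ[X], g = g'.map (algebraMap ℚ ℂ)) ∧
    (∃ h' : ℚ[X], h = h'.map (algebraMap ℚ ℂ)) := by
  have hgh : g.comp h ∈ liftsRing (algebraMap ℚ ℂ) := ⟨f, hcomp⟩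
  have hm : (g.natDegree : ℂ) ≠ 0 := Nat.cast_ne_zero.2 (by omega)
  obtain ⟨h', rfl⟩ := mem_liftsRing_of_comp_mem_liftsRing_right _ hg hm hh
    (by rwa [coeff_zero_eq_eval_zero]) hgh
  obtain ⟨g', rfl⟩ := mem_liftsRing_of_comp_mem_liftsRing_left _ ⟨h', rfl⟩ (by omega) hgh
  exact ⟨⟨g', rfl⟩, ⟨h', rfl⟩⟩

theorem rational_coeffs_of_monic_decomposition (f : ℚ[X]) (hf : f.Monic)
    (g h : Polynomial ℂ) (hg : g.Monic) (hh : h.Monic)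
    (hdg : 2 ≤ g.natDegree) (hdh : 2 ≤ h.natDegree) (hh0 : h.eval 0 = 0)
    (hcomp : f.map (algebraMap ℚ ℂ) = g.comp h) :
    (∃ g' : ℚ[X], g = g'.map (algebraMap ℚ ℂ)) ∧
    (∃ h' : ℚ[X], h = h'.map (algebraMap ℚ ℂ)) :=
  rational_coeffs_of_monic_decomposition_general f g h hg hh hdg hdh hh0 hcomp
end

section
/- If a polynomial f over a field K is indecomposable over K and char(K) does not divide deg f, then f is indecomposable over every extension field of K. More precisely: if f ∈ K[x] decomposes as f = g ∘ h over an extension L of K with deg g, deg h ≥ 2, then f also decomposes over K into factors of the same degrees. -/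
open Polynomial Finset


/-- Degree bound for a sum of scalar multiples of powers of a fixed polynomial. -/
lemma degree_sum_C_mul_pow_lt {R : Type*} [CommRing R] (h : R[X]) (m r d : ℕ)
    (hd : h.natDegree = m) (s : ℕ → R) (hr : ∀ i, i < r → i * m < d) :
    (∑ i ∈ Finset.range r, C (s i) * h ^ i).degree < (d : WithBot ℕ) := by
  refine lt_of_le_of_lt (degree_sum_le _ _) ?_
  refine (Finset.sup_lt_iff (WithBot.bot_lt_coe d)).mpr ?_
  intro i hi
  have hnat : (C (s i) * h ^ i).natDegree ≤ i * m := by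
    calc (C (s i) * h ^ i).natDegree ≤ (C (s i)).natDegree + (h ^ i).natDegree :=
          natDegree_mul_le
      _ ≤ 0 + i * m := by
          gcongr
          · exact le_of_eq (natDegree_C _)
          · exact le_trans natDegree_pow_le (by rw [hd])
      _ = i * m := by ring
  refine lt_of_le_of_lt (degree_le_natDegree) ?_
  exact WithBot.coe_lt_coe.mpr (lt_of_le_of_lt hnat (hr i (Finset.mem_range.mp hi)))

/-- Uniqueness of approximate k-th roots. -/
lemma approx_root_unique {L : Type*} [Field L] (k m : ℕ) (hkL : (k : L) ≠ 0)
    (h₁ h₂ : L[X]) (m1 : h₁.Monic) (m2 : h₂.Monic)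
    (d1 : h₁.natDegree = m) (d2 : h₂.natDegree = m)
    (hd : (h₁ ^ k - h₂ ^ k).degree < ((k * m - m : ℕ) : WithBot ℕ)) : h₁ = h₂ := by
  by_contra hne
  have hk1 : 1 ≤ k := by
    rcases Nat.eq_zero_or_pos k with h0 | h
    · exact absurd (by simp [h0]) hkL
    · exact h
  set S : L[X] := ∑ i ∈ Finset.range k, h₁ ^ i * h₂ ^ (k - 1 - i) with hS
  have hgeom : S * (h₁ - h₂) = h₁ ^ k - h₂ ^ k := geom_sum₂_mul _ _ _
  have hterm : ∀ i ∈ Finset.range k,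
      (h₁ ^ i * h₂ ^ (k - 1 - i)).coeff ((k - 1) * m) = 1 := by
    intro i hi
    have hi' : i ≤ k - 1 := by have := Finset.mem_range.mp hi; omega
    have hmono : (h₁ ^ i * h₂ ^ (k - 1 - i)).Monic := (m1.pow i).mul (m2.pow _)
    have hdeg : (h₁ ^ i * h₂ ^ (k - 1 - i)).natDegree = (k - 1) * m := by
      rw [(m1.pow i).natDegree_mul (m2.pow _), m1.natDegree_pow, m2.natDegree_pow, d1, d2]
      have : i * m + (k - 1 - i) * m = (i + (k - 1 - i)) * m := by ring
      rw [this, Nat.add_sub_cancel' hi']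
    rw [← hdeg]
    exact hmono.coeff_natDegree
  have hScoeff : S.coeff ((k - 1) * m) = k := by
    rw [hS, finset_sum_coeff, Finset.sum_congr rfl hterm]
    simp
  have hSne : S ≠ 0 := by
    intro h0
    rw [h0] at hScoeff
    exact hkL (by simpa using hScoeff.symm)
  have hdne : h₁ - h₂ ≠ 0 := sub_ne_zero.mpr hne
  have hge : ((k * m - m : ℕ) : WithBot ℕ) ≤ (h₁ ^ k - h₂ ^ k).degree := by
    rw [← hgeom, degree_mul]
    have h1 : ((((k - 1) * m : ℕ)) : WithBot ℕ) ≤ S.degree :=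
      le_degree_of_ne_zero (by rw [hScoeff]; exact hkL)
    have h2 : (0 : WithBot ℕ) ≤ (h₁ - h₂).degree := zero_le_degree_iff.mpr hdne
    have : ((k * m - m : ℕ) : WithBot ℕ) = (((k - 1) * m : ℕ) : WithBot ℕ) + 0 := by
      rw [add_zero, Nat.sub_one_mul]
    rw [this]
    exact add_le_add h1 h2
  exact absurd hd (not_lt.mpr hge)


lemma arith_aux (i u t j : ℕ) (hu : 1 ≤ u) :
    i * (t + (j + 1)) + (u + 1) * t + j + 2 ≤ (i + u + 1) * (t + (j + 1)) := by
  have h : (i + u + 1) * (t + (j + 1))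
      = i * (t + (j + 1)) + (u + 1) * t + (u + 1) * (j + 1) := by ring
  have h2 : 2 * (j + 1) ≤ (u + 1) * (j + 1) := Nat.mul_le_mul (by omega) le_rfl
  omega

lemma approx_root_exists {K : Type*} [Field K] (k m : ℕ) (hk : 1 ≤ k) (hkK : (k : K) ≠ 0)
    (F : K[X]) (hF : F.Monic) (hFd : F.natDegree = k * m) :
    ∃ p : K[X], p.Monic ∧ p.natDegree = m ∧
      (F - p ^ k).degree < ((k * m - m : ℕ) : WithBot ℕ) := by
  obtain ⟨k', rfl⟩ : ∃ k', k = k' + 1 := ⟨k - 1, (Nat.succ_pred_eq_of_pos hk).symm⟩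
  set k := k' + 1 with hkdef
  suffices H : ∀ j, j ≤ m → ∃ p : K[X], p.Monic ∧ p.natDegree = m ∧
      (F - p ^ k).degree < ((k * m - j : ℕ) : WithBot ℕ) from H m le_rfl
  intro j
  induction j with
  | zero =>
    intro _
    refine ⟨X ^ m, monic_X_pow m, natDegree_X_pow m, ?_⟩
    have h1 : (X ^ m : K[X]) ^ k = X ^ (k * m) := by rw [← pow_mul, mul_comm]
    have h2 : (F : K[X]).degree = ((k * m : ℕ) : WithBot ℕ) := by
      rw [degree_eq_natDegree hF.ne_zero, hFd]
    have := degree_sub_lt (p := F) (q := X ^ (k * m))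
      (by rw [h2, degree_X_pow]) hF.ne_zero
      (by rw [hF.leadingCoeff, (monic_X_pow (k*m)).leadingCoeff])
    rw [h1]
    simpa [h2] using this
  | succ j ih =>
    intro hj
    obtain ⟨p, hpm, hpd, hplt⟩ := ih (by omega)
    have hmpos : 0 < m := by omega
    set t := m - j - 1 with ht
    set D := k * m - j - 1 with hD
    have hmk : m ≤ k * m := Nat.le_mul_of_pos_left m (by omega)
    have hD1 : k * m - j = D + 1 := by omega
    set c := (F - p ^ k).coeff D with hc
    set e := c / (k : K) with he
    set y : K[X] := C e * X ^ t with hy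
    have hydeg : y.degree < p.degree := by
      rw [degree_eq_natDegree hpm.ne_zero, hpd]
      refine lt_of_le_of_lt (degree_C_mul_X_pow_le t e) ?_
      exact_mod_cast (by omega : t < m)
    have hp'm : (p + y).Monic := hpm.add_of_left hydeg
    have hp'd : (p + y).natDegree = m := by
      have : (p + y).degree = ((m : ℕ) : WithBot ℕ) := by
        rw [degree_add_eq_left_of_degree_lt hydeg, degree_eq_natDegree hpm.ne_zero, hpd]
      exact natDegree_eq_of_degree_eq_some this
    refine ⟨p + y, hp'm, hp'd, ?_⟩
    -- key identity
    have hkc : ((k : ℕ) : K[X]) * C e = C c := by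
      rw [← C_eq_natCast, ← C_mul]
      congr 1
      rw [he]
      field_simp
    set S : K[X] := ∑ i ∈ Finset.range k', p ^ i * y ^ (k - i) * ((k.choose i : ℕ) : K[X])
      with hSdef
    have key : F - (p + y) ^ k = (F - p ^ k - C c * X ^ D)
        - (C c * X ^ t * (p ^ k' - X ^ (k' * m))) - S := by
      have hexp : (p + y) ^ k = ∑ i ∈ Finset.range (k' + 2),
          p ^ i * y ^ (k - i) * ((k.choose i : ℕ) : K[X]) := add_pow p y k
      rw [hexp, Finset.sum_range_succ, Finset.sum_range_succ]
      have e1 : p ^ (k' + 1) * y ^ (k - (k' + 1)) * ((k.choose (k' + 1) : ℕ) : K[X])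
          = p ^ k := by
        simp [hkdef]
      have e2 : p ^ k' * y ^ (k - k') * ((k.choose k' : ℕ) : K[X])
          = C c * X ^ t * p ^ k' := by
        have : k - k' = 1 := by omega
        rw [this, pow_one, hkdef, Nat.choose_succ_self_right]
        rw [hy, ← hkdef]
        calc p ^ k' * (C e * X ^ t) * ((k : ℕ) : K[X])
            = (((k : ℕ) : K[X]) * C e) * X ^ t * p ^ k' := by ring
          _ = C c * X ^ t * p ^ k' := by rw [hkc]
      rw [e1, e2]
      have e3 : C c * X ^ t * X ^ (k' * m) = C c * X ^ D := by
        rw [mul_assoc, ← pow_add]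
        congr 2
        have hsm : k * m = k' * m + m := by rw [hkdef]; ring
        omega
      rw [mul_sub, e3]
      ring
    rw [key]
    -- now bound the three pieces
    have hA : (F - p ^ k - C c * X ^ D).degree < (D : WithBot ℕ) := by
      rw [degree_lt_iff_coeff_zero]
      intro i hi
      rcases eq_or_lt_of_le hi with rfl | hi'
      · rw [coeff_sub, coeff_C_mul, coeff_X_pow, if_pos rfl, mul_one, ← hc, sub_self]
      · have h0 : (F - p ^ k).coeff i = 0 := by
          have := (degree_lt_iff_coeff_zero _ _).mp hplt i (by omega)
          exact this
        have h1 : (C c * X ^ D).coeff i = 0 := by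
          rw [coeff_C_mul, coeff_X_pow, if_neg (by omega)]
          ring
        simp [coeff_sub, h0, h1]
    have hB : (C c * X ^ t * (p ^ k' - X ^ (k' * m))).degree < (D : WithBot ℕ) := by
      rcases eq_or_ne c 0 with h0 | hc0
      · rw [h0, map_zero, zero_mul, zero_mul, degree_zero]
        exact WithBot.bot_lt_coe D
      · have hsub : (p ^ k' - X ^ (k' * m)).degree < ((k' * m : ℕ) : WithBot ℕ) := by
          rcases Nat.eq_zero_or_pos k' with rfl | hk'
          · simpa using WithBot.bot_lt_coe 0
          · have hmon : (p ^ k').Monic := hpm.pow k'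
            have hd : (p ^ k').degree = ((k' * m : ℕ) : WithBot ℕ) := by
              rw [degree_eq_natDegree hmon.ne_zero, hpm.natDegree_pow, hpd]
            have := degree_sub_lt (p := p ^ k') (q := X ^ (k' * m))
              (by rw [hd, degree_X_pow]) hmon.ne_zero
              (by rw [hmon.leadingCoeff, (monic_X_pow _).leadingCoeff])
            rwa [hd] at this
        refine lt_of_le_of_lt (degree_mul_le _ _) ?_
        have h1 : (C c * X ^ t).degree = (t : WithBot ℕ) := degree_C_mul_X_pow t hc0
        rw [h1]
        have hDsum : D = t + k' * m := by
          have hsm : k * m = k' * m + m := by rw [hkdef]; ring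
          omega
        rw [hDsum]
        have : ((t + k' * m : ℕ) : WithBot ℕ) = (t : WithBot ℕ) + ((k' * m : ℕ) : WithBot ℕ) := by
          push_cast; rfl
        rw [this]
        exact WithBot.add_lt_add_left (by simp) hsub
    have hSlt : S.degree < (D : WithBot ℕ) := by
      rw [hSdef]
      refine lt_of_le_of_lt (degree_sum_le _ _) ?_
      refine (Finset.sup_lt_iff (WithBot.bot_lt_coe D)).mpr ?_
      intro i hi
      have hik : i < k' := Finset.mem_range.mp hi
      have hnat : (p ^ i * y ^ (k - i) * ((k.choose i : ℕ) : K[X])).natDegree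
          ≤ i * m + (k - i) * t := by
        calc (p ^ i * y ^ (k - i) * ((k.choose i : ℕ) : K[X])).natDegree
            ≤ (p ^ i * y ^ (k - i)).natDegree + ((k.choose i : ℕ) : K[X]).natDegree :=
              natDegree_mul_le
          _ ≤ (p ^ i).natDegree + (y ^ (k - i)).natDegree + 0 := by
              gcongr
              · exact natDegree_mul_le
              · rw [← C_eq_natCast]; exact le_of_eq (natDegree_C _)
          _ ≤ i * m + (k - i) * t := by
              rw [add_zero]
              gcongr
              · exact le_trans natDegree_pow_le (by rw [hpd])
              · refine le_trans natDegree_pow_le ?_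
                gcongr
                rw [hy]
                calc (C e * X ^ t).natDegree ≤ (C e).natDegree + (X ^ t : K[X]).natDegree :=
                      natDegree_mul_le
                  _ = t := by rw [natDegree_C, natDegree_X_pow, zero_add]
      have harith : i * m + (k - i) * t < D := by
        have hu2 : 1 ≤ k' - i := by omega
        set u := k' - i with hudef
        have hu1 : k' = i + u := by omega
        have hki : k - i = u + 1 := by omega
        have hm' : m = t + (j + 1) := by omega
        have hkm : k * m = (i + u + 1) * (t + (j + 1)) := by rw [hkdef, hu1, hm']
        have harr := arith_aux i u t j hu2
        rw [hki, hm']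
        omega
      refine lt_of_le_of_lt degree_le_natDegree ?_
      exact WithBot.coe_lt_coe.mpr (lt_of_le_of_lt hnat harith)
    -- combine
    have hfinal : ((F - p ^ k - C c * X ^ D)
        - C c * X ^ t * (p ^ k' - X ^ (k' * m)) - S).degree < (D : WithBot ℕ) := by
      refine lt_of_le_of_lt (degree_sub_le _ _) (max_lt ?_ hSlt)
      exact lt_of_le_of_lt (degree_sub_le _ _) (max_lt hA hB)
    have hDeq : k * m - (j + 1) = D := by omega
    rw [hDeq]
    exact hfinal


lemma descend_comp {K L : Type*} [Field K] [Field L] [Algebra K L] (p : K[X])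
    (hpd : 0 < p.natDegree) (hp : p.Monic) :
    ∀ n (G : L[X]), G.natDegree = n →
      (∃ q : K[X], q.map (algebraMap K L) = G.comp (p.map (algebraMap K L))) →
      ∃ G' : K[X], G'.map (algebraMap K L) = G := by
  intro n
  induction n using Nat.strong_induction_on with
  | _ n ih =>
    intro G hGd hq
    obtain ⟨q, hq⟩ := hq
    set P : L[X] := p.map (algebraMap K L) with hP
    have hPm : P.Monic := hp.map _
    have hPd : P.natDegree = p.natDegree := natDegree_map _
    rcases Nat.eq_zero_or_pos n with rfl | hn
    · -- G is a constant
      have hGC : G = C (G.coeff 0) := eq_C_of_natDegree_eq_zero hGd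
      have hcomp : G.comp P = C (G.coeff 0) := by
        conv_lhs => rw [hGC]
        rw [C_comp]
      have : algebraMap K L (q.coeff 0) = G.coeff 0 := by
        have := congrArg (fun r => Polynomial.coeff r 0) hq
        simpa [hcomp, coeff_map] using this
      exact ⟨C (q.coeff 0), by rw [map_C, this, ← hGC]⟩
    · have hGne : G ≠ 0 := fun h0 => by simp [h0] at hGd; omega
      set b : L := G.leadingCoeff with hb
      have hbne : b ≠ 0 := leadingCoeff_ne_zero.mpr hGne
      -- b is the coefficient of G.comp P at n * p.natDegree
      have hcompdeg : (G.comp P).natDegree = n * p.natDegree := by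
        rw [natDegree_comp, hPd, hGd]
      have hcomplc : (G.comp P).leadingCoeff = b := by
        rw [leadingCoeff_comp (by rw [hPd]; omega), hPm.leadingCoeff, one_pow, mul_one]
      have hbval : algebraMap K L (q.coeff (n * p.natDegree)) = b := by
        have := congrArg (fun r => Polynomial.coeff r (n * p.natDegree)) hq
        simp only [coeff_map] at this
        rw [this, ← hcompdeg, ← leadingCoeff, hcomplc]
      set b' : K := q.coeff (n * p.natDegree) with hb'
      set G₁ : L[X] := G - C b * X ^ n with hG₁
      have hG₁deg : G₁.natDegree < n := by
        rcases eq_or_ne G₁ 0 with h0 | h0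
        · rw [h0]; simpa using hn
        · rw [natDegree_lt_iff_degree_lt h0]
          have hdg : G.degree = (n : WithBot ℕ) := by rw [degree_eq_natDegree hGne, hGd]
          rw [hG₁, ← hdg]
          refine degree_sub_lt ?_ hGne ?_
          · rw [degree_C_mul_X_pow n hbne, hdg]
          · rw [← hb, leadingCoeff_C_mul_X_pow]
      have hG₁comp : (q - C b' * p ^ n).map (algebraMap K L)
          = G₁.comp P := by
        rw [Polynomial.map_sub, Polynomial.map_mul, Polynomial.map_pow, map_C, hbval, hq,
          hG₁, sub_comp, mul_comp, C_comp, X_pow_comp]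
      obtain ⟨G₁', hG₁'⟩ := ih G₁.natDegree hG₁deg G₁ rfl ⟨_, hG₁comp⟩
      refine ⟨G₁' + C b' * X ^ n, ?_⟩
      rw [Polynomial.map_add, Polynomial.map_mul, map_C, hbval, Polynomial.map_pow, map_X,
        hG₁']
      rw [hG₁]
      ring

theorem decomposable_descends {K L : Type*} [Field K] [Field L] [Algebra K L]
    (f : K[X]) (hf : 1 < f.natDegree) (hchar : ¬ (ringChar K ∣ f.natDegree))
    (g h : L[X]) (hdg : 2 ≤ g.natDegree) (hdh : 2 ≤ h.natDegree)
    (hcomp : f.map (algebraMap K L) = g.comp h) :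
    ∃ g' h' : K[X], g'.natDegree = g.natDegree ∧ h'.natDegree = h.natDegree ∧
      f = g'.comp h' := by
  have hinj : Function.Injective ⇑(algebraMap K L) := (algebraMap K L).injective
  have hfne : f ≠ 0 := fun h0 => by simp [h0] at hf
  have hhne : h ≠ 0 := fun h0 => by simp [h0] at hdh
  obtain ⟨kk, hkk⟩ : ∃ kk, g.natDegree = kk + 2 := ⟨g.natDegree - 2, by omega⟩
  set m := h.natDegree with hm
  have hm2 : 2 ≤ m := hdh
  have hn : f.natDegree = (kk + 2) * m := by
    have h1 : (f.map (algebraMap K L)).natDegree = f.natDegree := natDegree_map _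
    rw [hcomp, natDegree_comp, hkk] at h1
    exact h1.symm
  have hkK : ((kk + 2 : ℕ) : K) ≠ 0 := by
    intro h0
    exact hchar (dvd_trans ((ringChar.spec K (kk + 2)).mp h0) ⟨m, hn⟩)
  have hkL : ((kk + 2 : ℕ) : L) ≠ 0 := by
    intro h0
    apply hkK
    apply hinj
    rw [map_natCast, h0, map_zero]
  -- normalize h to be monic
  have hune : h.leadingCoeff ≠ 0 := leadingCoeff_ne_zero.mpr hhne
  set u := h.leadingCoeff with hu
  set h1 := C u⁻¹ * h with hh1
  have hh1m : h1.Monic := by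
    rw [Monic, hh1, leadingCoeff_mul, leadingCoeff_C, inv_mul_cancel₀ hune]
  have hh1d : h1.natDegree = m := by
    rw [hh1, natDegree_C_mul (inv_ne_zero hune)]
  set g1 := g.comp (C u * X) with hg1
  have hg1d : g1.natDegree = kk + 2 := by
    rw [hg1, natDegree_comp, natDegree_C_mul_X u hune, mul_one, hkk]
  have he1 : (C u * X).comp h1 = h := by
    rw [mul_comp, C_comp, X_comp, hh1, ← mul_assoc, ← C_mul, mul_inv_cancel₀ hune, C_1,
      one_mul]
  have hcomp1 : f.map (algebraMap K L) = g1.comp h1 := by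
    rw [hg1, comp_assoc, he1, hcomp]
  have ha : algebraMap K L f.leadingCoeff = g1.leadingCoeff := by
    have h1' : (f.map (algebraMap K L)).leadingCoeff = algebraMap K L f.leadingCoeff :=
      leadingCoeff_map _
    rw [hcomp1, leadingCoeff_comp (by rw [hh1d]; omega), hh1m.leadingCoeff, one_pow,
      mul_one] at h1'
    exact h1'.symm
  set a := g1.leadingCoeff with hadef
  have ha0 : a ≠ 0 := fun h0 =>
    (leadingCoeff_ne_zero.mpr hfne) (hinj (by rw [ha, h0, map_zero]))
  -- shift h1 to kill the subleading coefficient of g1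
  set c := g1.coeff (kk + 1) / (((kk + 2 : ℕ) : L) * a) with hcdef
  set h2 := h1 + C c with hh2
  have hCclt : (C c).degree < h1.degree := by
    refine lt_of_le_of_lt degree_C_le ?_
    rw [degree_eq_natDegree hh1m.ne_zero, hh1d]
    exact_mod_cast (by omega : (0 : ℕ) < m)
  have hh2m : h2.Monic := hh1m.add_of_left hCclt
  have hh2d : h2.natDegree = m := by
    have : h2.degree = ((m : ℕ) : WithBot ℕ) := by
      rw [hh2, degree_add_eq_left_of_degree_lt hCclt, degree_eq_natDegree hh1m.ne_zero, hh1d]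
    exact natDegree_eq_of_degree_eq_some this
  set g2 := g1.comp (X - C c) with hg2
  have hg2d : g2.natDegree = kk + 2 := by
    rw [hg2, natDegree_comp, natDegree_X_sub_C, mul_one, hg1d]
  have he2 : (X - C c).comp h2 = h1 := by
    rw [sub_comp, X_comp, C_comp, hh2, add_sub_cancel_right]
  have hcomp2 : f.map (algebraMap K L) = g2.comp h2 := by
    rw [hg2, comp_assoc, he2]
    exact hcomp1
  -- the normalized monic polynomial F over K
  set F := C f.leadingCoeff⁻¹ * f with hF
  have hFm : F.Monic := by
    rw [Monic, hF, leadingCoeff_mul, leadingCoeff_C,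
      inv_mul_cancel₀ (leadingCoeff_ne_zero.mpr hfne)]
  have hFd : F.natDegree = (kk + 2) * m := by
    rw [hF, natDegree_C_mul (inv_ne_zero (leadingCoeff_ne_zero.mpr hfne)), hn]
  -- expansion of F.map - h2 ^ (kk+2) in powers of h1
  set d : ℕ → L := fun i =>
    a⁻¹ * g1.coeff i - ((kk + 2).choose i : L) * c ^ (kk + 2 - i) with hd
  have hexp1 : f.map (algebraMap K L)
      = ∑ i ∈ Finset.range (kk + 3), C (g1.coeff i) * h1 ^ i := by
    have e : g1.comp h1 = eval₂ C h1 g1 := rfl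
    rw [hcomp1, e, eval₂_eq_sum_range, hg1d]
  have hexp2 : h2 ^ (kk + 2)
      = ∑ i ∈ Finset.range (kk + 3),
          h1 ^ i * C c ^ (kk + 2 - i) * (((kk + 2).choose i : ℕ) : L[X]) := by
    rw [hh2]
    exact add_pow h1 (C c) (kk + 2)
  have hg1top : g1.coeff (kk + 2) = a := by
    rw [hadef, leadingCoeff, hg1d]
  have hkey : F.map (algebraMap K L) - h2 ^ (kk + 2)
      = ∑ i ∈ Finset.range (kk + 1), C (d i) * h1 ^ i := by
    have hFmap : F.map (algebraMap K L) = C a⁻¹ * (f.map (algebraMap K L)) := by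
      rw [hF, Polynomial.map_mul, map_C, map_inv₀, ha]
    have hbig : F.map (algebraMap K L) - h2 ^ (kk + 2)
        = ∑ i ∈ Finset.range (kk + 3), C (d i) * h1 ^ i := by
      rw [hFmap, hexp1, hexp2, Finset.mul_sum, ← Finset.sum_sub_distrib]
      refine Finset.sum_congr rfl fun i _ => ?_
      simp only [hd]
      rw [C_sub, C_mul, C_mul, C_pow, ← C_eq_natCast]
      ring
    have hdtop : d (kk + 2) = 0 := by
      simp only [hd]
      rw [hg1top, Nat.choose_self, Nat.sub_self, pow_zero, Nat.cast_one]
      simp [inv_mul_cancel₀ ha0]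
    have hdnext : d (kk + 1) = 0 := by
      have hk2' : (kk : L) + 2 ≠ 0 := by
        have h' := hkL
        push_cast at h'
        exact h'
      simp only [hd]
      rw [Nat.choose_succ_self_right]
      have e1 : kk + 2 - (kk + 1) = 1 := by omega
      rw [e1, pow_one, hcdef]
      push_cast
      field_simp
      ring
    rw [hbig]
    rw [show kk + 3 = (kk + 2) + 1 from rfl, Finset.sum_range_succ, Finset.sum_range_succ,
      hdtop, hdnext, map_zero, zero_mul, zero_mul, add_zero, add_zero]
  have hbound : (F.map (algebraMap K L) - h2 ^ (kk + 2)).degree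
      < (((kk + 2) * m - m : ℕ) : WithBot ℕ) := by
    rw [hkey]
    refine degree_sum_C_mul_pow_lt h1 m (kk + 1) _ hh1d d ?_
    intro i hi
    have e1 : (kk + 2) * m - m = (kk + 1) * m := by
      have : (kk + 2) * m = (kk + 1) * m + m := by ring
      omega
    rw [e1]
    exact (Nat.mul_lt_mul_right (by omega)).mpr hi
  -- existence of the approximate root over K
  obtain ⟨p, hpm, hpd, hplt⟩ := approx_root_exists (kk + 2) m (by omega) hkK F hFm hFd
  have hpltL : (F.map (algebraMap K L) - (p.map (algebraMap K L)) ^ (kk + 2)).degree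
      < (((kk + 2) * m - m : ℕ) : WithBot ℕ) := by
    have e : F.map (algebraMap K L) - (p.map (algebraMap K L)) ^ (kk + 2)
        = (F - p ^ (kk + 2)).map (algebraMap K L) := by
      rw [Polynomial.map_sub, Polynomial.map_pow]
    rw [e, degree_map_eq_of_injective hinj]
    exact hplt
  have hdiff : (h2 ^ (kk + 2) - (p.map (algebraMap K L)) ^ (kk + 2)).degree
      < (((kk + 2) * m - m : ℕ) : WithBot ℕ) := by
    have e : h2 ^ (kk + 2) - (p.map (algebraMap K L)) ^ (kk + 2)
        = (F.map (algebraMap K L) - (p.map (algebraMap K L)) ^ (kk + 2))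
          - (F.map (algebraMap K L) - h2 ^ (kk + 2)) := by ring
    rw [e]
    exact lt_of_le_of_lt (degree_sub_le _ _) (max_lt hpltL hbound)
  have hh2p : h2 = p.map (algebraMap K L) :=
    approx_root_unique (kk + 2) m hkL h2 (p.map _) hh2m (hpm.map _) hh2d
      (by rw [natDegree_map, hpd]) hdiff
  -- descend g2 to K
  have hcomp3 : f.map (algebraMap K L) = g2.comp (p.map (algebraMap K L)) := by
    rw [← hh2p]
    exact hcomp2
  obtain ⟨g', hg'⟩ := descend_comp p (by rw [hpd]; omega) hpm g2.natDegree g2 rfl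
    ⟨f, hcomp3⟩
  refine ⟨g', p, ?_, ?_, ?_⟩
  · rw [← natDegree_map (algebraMap K L) (p := g'), hg', hg2d, hkk]
  · rw [hpd, hm]
  · apply map_injective (algebraMap K L) hinj
    rw [Polynomial.map_comp, hg', hcomp3]
end

section
/- Let f ∈ ℤ[x] be monic and suppose f = g ∘ h with g, h ∈ ℂ[x] monic, deg g ≥ 2, deg h ≥ 2, and h(0) = 0. Then g, h ∈ ℤ[x]. -/
/-
Every root `b` of `g` makes `h - b` a monic factor of `f`, so the coefficients of `h - b` are
algebraic integers; since `h(0) = 0` so is `b`, and hence so are all coefficients of `g` and `h`.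
They are also rational. Once the degrees `m, n` and `h(0)` are fixed, a monic decomposition is
unique: `g ∘ h - h ^ m` has degree at most `(m - 1) n`, and `h₁ ^ m - h₂ ^ m` has degree
`(m - 1) n + deg (h₁ - h₂)`. Hence every automorphism of the algebraic closure of `ℚ` fixes `g`
and `h`. Finally, rational algebraic integers are integers.
-/

open Polynomial

namespace Polynomial

section Decomposition

variable {R : Type*} [CommRing R]

theorem natDegree_comp_sub_pow_natDegree_le {g : R[X]} (hg : g.Monic) (h : R[X]) :
    (g.comp h - h ^ g.natDegree).natDegree ≤ (g.natDegree - 1) * h.natDegree := by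
  have : g.comp h - h ^ g.natDegree = g.eraseLead.comp h := by
    rw [← self_sub_monomial_natDegree_leadingCoeff, hg.leadingCoeff, sub_comp,
      ← C_mul_X_pow_eq_monomial, C_1, one_mul, X_pow_comp]
  rw [this]
  exact natDegree_comp_le.trans (Nat.mul_le_mul_right _ g.eraseLead_natDegree_le)

theorem Monic.coeff_geom_sum₂ {p q : R[X]} (hp : p.Monic) (hq : q.Monic)
    (hpq : q.natDegree = p.natDegree) (m : ℕ) :
    (∑ i ∈ Finset.range m, p ^ i * q ^ (m - 1 - i)).coeff ((m - 1) * p.natDegree) = m := by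
  have hterm : ∀ i ∈ Finset.range m,
      (p ^ i * q ^ (m - 1 - i)).coeff ((m - 1) * p.natDegree) = 1 := by
    intro i hi
    have hmonic := (hp.pow i).mul (hq.pow (m - 1 - i))
    rw [← hmonic.coeff_natDegree, (hp.pow i).natDegree_mul (hq.pow _), hp.natDegree_pow,
      hq.natDegree_pow, hpq, ← add_mul]
    rw [Finset.mem_range] at hi
    congr 2
    omega
  rw [finsetSum_coeff, Finset.sum_congr rfl hterm]
  simp

variable [IsDomain R] [CharZero R]

theorem eq_of_natDegree_pow_sub_pow_le {p q : R[X]} (hp : p.Monic) (hq : q.Monic)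
    (hpq : q.natDegree = p.natDegree) {m : ℕ} (hm : m ≠ 0)
    (hdeg : (p ^ m - q ^ m).natDegree ≤ (m - 1) * p.natDegree) (h0 : p.coeff 0 = q.coeff 0) :
    p = q := by
  by_contra hne
  set A := ∑ i ∈ Finset.range m, p ^ i * q ^ (m - 1 - i)
  have hA : A.coeff ((m - 1) * p.natDegree) ≠ 0 := by
    rw [hp.coeff_geom_sum₂ hq hpq]
    exact_mod_cast hm
  have hconst : (p - q).natDegree = 0 := by
    have hA0 : A ≠ 0 := fun h => hA (by rw [h, coeff_zero])
    have hmul := natDegree_mul hA0 (sub_ne_zero.mpr hne)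
    rw [geom_sum₂_mul] at hmul
    have := le_natDegree_of_ne_zero hA
    omega
  apply hne
  rw [← sub_eq_zero, eq_C_of_natDegree_eq_zero hconst, coeff_sub, h0, sub_self, C_0]

theorem eq_of_comp_eq_comp {g₁ g₂ h₁ h₂ : R[X]} (hg₁ : g₁.Monic) (hg₂ : g₂.Monic)
    (hh₁ : h₁.Monic) (hh₂ : h₂.Monic) (hg : g₂.natDegree = g₁.natDegree)
    (hh : h₂.natDegree = h₁.natDegree) (hg0 : g₁.natDegree ≠ 0) (hh0 : h₁.natDegree ≠ 0)
    (h0 : h₁.coeff 0 = h₂.coeff 0) (hcomp : g₁.comp h₁ = g₂.comp h₂) : g₁ = g₂ ∧ h₁ = h₂ := by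
  set m := g₁.natDegree
  have hright : h₁ = h₂ := by
    refine eq_of_natDegree_pow_sub_pow_le hh₁ hh₂ hh hg0 ?_ h0
    have : h₁ ^ m - h₂ ^ m = (g₂.comp h₂ - h₂ ^ g₂.natDegree) - (g₁.comp h₁ - h₁ ^ m) := by
      rw [hcomp, hg]; ring
    rw [this]
    refine (natDegree_sub_le _ _).trans (max_le ?_ (natDegree_comp_sub_pow_natDegree_le hg₁ h₁))
    simpa only [hg, hh] using natDegree_comp_sub_pow_natDegree_le hg₂ h₂
  subst hright
  refine ⟨?_, rfl⟩
  rcases comp_eq_zero_iff.mp (show (g₁ - g₂).comp h₁ = 0 by rw [sub_comp, hcomp, sub_self])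
    with hsub | ⟨-, hC⟩
  · exact sub_eq_zero.mp hsub
  · exact absurd (congrArg natDegree hC) (by simpa using hh0)

end Decomposition

section Integrality

variable {R K : Type*} [CommRing R] [Field K] [Algebra R K] {f : R[X]} {g h : K[X]}

theorem isIntegral_coeff_sub_C_of_comp_eq_map (hf : f.Monic) (hh : h.Monic)
    (hdh : h.natDegree ≠ 0) (hcomp : f.map (algebraMap R K) = g.comp h) {b : K}
    (hb : g.IsRoot b) (i : ℕ) : IsIntegral R ((h - C b).coeff i) := by
  refine isIntegral_coeff_of_dvd f _ hf (hh.sub_of_left ?_) ?_ i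
  · exact degree_C_le.trans_lt (natDegree_pos_iff_degree_pos.mp (Nat.pos_of_ne_zero hdh))
  · obtain ⟨q, hq⟩ := dvd_iff_isRoot.mpr hb
    exact ⟨q.comp h, by rw [hcomp, hq, mul_comp, sub_comp, X_comp, C_comp]⟩

theorem isIntegral_coeff_of_comp_eq_map [IsAlgClosed K] (hf : f.Monic) (hg : g.Monic)
    (hh : h.Monic) (hdg : g.natDegree ≠ 0) (hdh : h.natDegree ≠ 0)
    (hh0 : IsIntegral R (h.coeff 0)) (hcomp : f.map (algebraMap R K) = g.comp h) (i : ℕ) :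
    IsIntegral R (g.coeff i) ∧ IsIntegral R (h.coeff i) := by
  have hroot : ∀ b, g.IsRoot b → IsIntegral R b := fun b hb => by
    have := isIntegral_coeff_sub_C_of_comp_eq_map hf hh hdh hcomp hb 0
    rw [coeff_sub, coeff_C_zero] at this
    simpa using hh0.sub this
  obtain ⟨b, hb⟩ := IsAlgClosed.exists_root g
    (by rwa [degree_eq_natDegree hg.ne_zero, Nat.cast_ne_zero])
  refine ⟨isIntegral_coeff_of_factors g (by rw [hg.leadingCoeff]; exact isIntegral_one)
    (IsAlgClosed.splits g) hroot i, ?_⟩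
  have hCb : IsIntegral R ((C b).coeff i) := by
    rw [coeff_C]
    split_ifs
    exacts [hroot b hb, isIntegral_zero]
  simpa only [← coeff_add, sub_add_cancel] using
    (isIntegral_coeff_sub_C_of_comp_eq_map hf hh hdh hcomp hb i).add hCb

end Integrality

section Descent

variable {k K : Type*} [Field k] [Field K] [Algebra k K]

theorem mem_lifts_of_forall_map_eq [IsGalois k K] {p : K[X]}
    (hp : ∀ σ : Gal(K/k), p.map (σ : K →+* K) = p) : p ∈ lifts (algebraMap k K) :=
  (lifts_iff_coeff_lifts p).mpr fun n => (InfiniteGalois.mem_range_algebraMap_iff_fixed _).mpr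
    fun σ => by simpa using congrArg (coeff · n) (hp σ)

theorem mem_lifts_of_comp_eq_map_of_isGalois [IsGalois k K] [CharZero K] {f : k[X]}
    {g h : K[X]} (hg : g.Monic) (hh : h.Monic) (hdg : g.natDegree ≠ 0) (hdh : h.natDegree ≠ 0)
    (hh0 : h.coeff 0 ∈ Set.range (algebraMap k K)) (hcomp : f.map (algebraMap k K) = g.comp h) :
    g ∈ lifts (algebraMap k K) ∧ h ∈ lifts (algebraMap k K) := by
  obtain ⟨c, hc⟩ := hh0
  have hfix (σ : Gal(K/k)) : g.map (σ : K →+* K) = g ∧ h.map (σ : K →+* K) = h := by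
    refine (eq_of_comp_eq_comp hg (hg.map _) hh (hh.map _) (natDegree_map _) (natDegree_map _)
      hdg hdh (by simp [← hc]) ?_).imp Eq.symm Eq.symm
    rw [← map_comp, ← hcomp, map_map]
    congr 1
    ext x
    simp
  exact ⟨mem_lifts_of_forall_map_eq fun σ => (hfix σ).1,
    mem_lifts_of_forall_map_eq fun σ => (hfix σ).2⟩

theorem mem_lifts_of_comp_eq_map [IsAlgClosed K] [CharZero k] {f : k[X]} {g h : K[X]}
    (hf : f.Monic) (hg : g.Monic) (hh : h.Monic) (hdg : g.natDegree ≠ 0)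
    (hdh : h.natDegree ≠ 0) (hh0 : h.coeff 0 ∈ Set.range (algebraMap k K))
    (hcomp : f.map (algebraMap k K) = g.comp h) :
    g ∈ lifts (algebraMap k K) ∧ h ∈ lifts (algebraMap k K) := by
  -- `K / k` need not be algebraic; descend through the algebraic closure of `k` in `K`.
  let A := algebraicClosure k K
  have : IsGalois k A := {}
  have : CharZero A := charZero_of_injective_algebraMap (algebraMap k A).injective
  have hinj : Function.Injective (algebraMap A K) := (algebraMap A K).injective
  obtain ⟨c, hc⟩ := hh0
  have hint := isIntegral_coeff_of_comp_eq_map hf hg hh hdg hdh (hc ▸ isIntegral_algebraMap) hcomp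
  have hlifts (p : K[X]) (hp : ∀ i, IsIntegral k (p.coeff i)) : p ∈ lifts (algebraMap A K) :=
    (lifts_iff_coeff_lifts p).mpr fun i => ⟨⟨_, mem_algebraicClosure_iff'.mpr (hp i)⟩, rfl⟩
  obtain ⟨gA, rfl, hdgA, hgA⟩ := lifts_and_natDegree_eq_and_monic (hlifts g (hint · |>.1)) hg
  obtain ⟨hA, rfl, hdhA, hhA⟩ := lifts_and_natDegree_eq_and_monic (hlifts h (hint · |>.2)) hh
  have hA0 : hA.coeff 0 ∈ Set.range (algebraMap k A) :=
    ⟨c, hinj (by rw [← IsScalarTower.algebraMap_apply, hc, coeff_map])⟩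
  have hcompA : f.map (algebraMap k A) = gA.comp hA :=
    map_injective _ hinj (by rw [map_map, ← IsScalarTower.algebraMap_eq, hcomp, map_comp])
  have hpush (p : A[X]) (hp : p ∈ lifts (algebraMap k A)) :
      p.map (algebraMap A K) ∈ lifts (algebraMap k K) := by
    obtain ⟨q, rfl⟩ := (mem_lifts p).mp hp
    exact (mem_lifts _).mpr ⟨q, by rw [map_map, ← IsScalarTower.algebraMap_eq]⟩
  have hdesc := mem_lifts_of_comp_eq_map_of_isGalois hgA hhA (hdgA ▸ hdg) (hdhA ▸ hdh) hA0 hcompA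
  exact ⟨hpush _ hdesc.1, hpush _ hdesc.2⟩

end Descent

theorem mem_lifts_of_isIntegral_coeff {R k K : Type*} [CommRing R] [IsIntegrallyClosed R]
    [Field k] [Algebra R k] [IsFractionRing R k] [Field K] [Algebra R K] [Algebra k K]
    [IsScalarTower R k K] {p : K[X]} (hp : p ∈ lifts (algebraMap k K))
    (hint : ∀ i, IsIntegral R (p.coeff i)) : p ∈ lifts (algebraMap R K) := by
  refine (lifts_iff_coeff_lifts p).mpr fun n => ?_
  obtain ⟨q, hq⟩ := (lifts_iff_coeff_lifts p).mp hp n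
  have hq_int : IsIntegral R q :=
    (isIntegral_algebraMap_iff (algebraMap k K).injective).mp (hq ▸ hint n)
  obtain ⟨z, rfl⟩ := IsIntegrallyClosed.isIntegral_iff.mp hq_int
  exact ⟨z, by rw [IsScalarTower.algebraMap_apply R k K, hq]⟩

end Polynomial

theorem integer_coeffs_of_monic_decomposition (f : ℤ[X]) (hf : f.Monic)
    (g h : Polynomial ℂ) (hg : g.Monic) (hh : h.Monic)
    (hdg : 2 ≤ g.natDegree) (hdh : 2 ≤ h.natDegree) (hh0 : h.eval 0 = 0)
    (hcomp : f.map (Int.castRingHom ℂ) = g.comp h) :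
    (∃ g' : ℤ[X], g = g'.map (Int.castRingHom ℂ)) ∧
    (∃ h' : ℤ[X], h = h'.map (Int.castRingHom ℂ)) := by
  rw [← coeff_zero_eq_eval_zero] at hh0
  rw [← algebraMap_int_eq] at hcomp ⊢
  have hcompℚ : (f.map (algebraMap ℤ ℚ)).map (algebraMap ℚ ℂ) = g.comp h := by
    rw [map_map, ← IsScalarTower.algebraMap_eq, hcomp]
  have hrat := mem_lifts_of_comp_eq_map (hf.map _) hg hh (by omega) (by omega)
    ⟨0, by rw [map_zero, hh0]⟩ hcompℚ
  have hint := isIntegral_coeff_of_comp_eq_map hf hg hh (by omega) (by omega)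
    (hh0 ▸ isIntegral_zero) hcomp
  obtain ⟨g', hg'⟩ := (mem_lifts g).mp (mem_lifts_of_isIntegral_coeff hrat.1 (hint · |>.1))
  obtain ⟨h', hh'⟩ := (mem_lifts h).mp (mem_lifts_of_isIntegral_coeff hrat.2 (hint · |>.2))
  exact ⟨⟨g', hg'.symm⟩, ⟨h', hh'.symm⟩⟩
end

section
/- Let f(x) = c_n x^n + c_{n-1} x^{n-1} + … + c_0 ∈ ℤ[x] with c_n ≠ 0 and n ≥ 2. If gcd(c_{n-1}, n) = 1, then f is indecomposable over ℂ (f cannot be written as g ∘ h with g, h ∈ ℂ[x] of degree > 1). -/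
/-!
Normalise a decomposition `f = G ∘ H` over `ℂ` so that `H` is monic, with `deg G = a`,
`deg H = b`, `n = a b`. Comparing coefficients of `x^(n-1)` gives `c_{n-1} = a c_n s`, where
`s` is the subleading coefficient of `H`. For a root `β` of `G`, the roots of `H - β` are roots
of `f`, so `c_n` times each of them is an algebraic integer; their sum is `-s`, hence
`c_n s = c_{n-1}/a` is a rational algebraic integer, i.e. an integer. Thus `a` divides both
`c_{n-1}` and `n`.
-/

open Polynomial

namespace Polynomial

theorem coeff_comp_natDegree_mul_sub_one {R : Type*} [CommRing R] {g h : R[X]} (hh : h.Monic)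
    (hg : 0 < g.natDegree) (hb : 1 < h.natDegree) :
    (g.comp h).coeff (g.natDegree * h.natDegree - 1) =
      g.natDegree * g.leadingCoeff * h.nextCoeff := by
  nontriviality R
  set a := g.natDegree
  have hsplit : g.comp h = g.eraseLead.comp h + C g.leadingCoeff * h ^ a := by
    conv_lhs => rw [← eraseLead_add_C_mul_X_pow g]
    rw [add_comp, mul_comp, C_comp, X_pow_comp]
  -- the lower terms of `g` only reach degree `(a - 1) * deg h < a * deg h - 1`
  have hlower : (g.eraseLead.comp h).coeff (a * h.natDegree - 1) = 0 := by
    refine coeff_eq_zero_of_natDegree_lt (natDegree_comp_le.trans_lt ?_)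
    have : g.eraseLead.natDegree * h.natDegree ≤ (a - 1) * h.natDegree :=
      Nat.mul_le_mul_right _ (eraseLead_natDegree_le g)
    have : (a - 1) * h.natDegree = a * h.natDegree - h.natDegree := by rw [Nat.sub_mul, one_mul]
    have : h.natDegree ≤ a * h.natDegree := Nat.le_mul_of_pos_left _ hg
    omega
  have hpow : (h ^ a).coeff (a * h.natDegree - 1) = a * h.nextCoeff := by
    rw [← nsmul_eq_mul, ← hh.nextCoeff_pow,
      nextCoeff_of_natDegree_pos (by rw [hh.natDegree_pow]; positivity), hh.natDegree_pow]
  rw [hsplit, coeff_add, hlower, coeff_C_mul, hpow, zero_add]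
  ring

theorem nextCoeff_sub_C {R : Type*} [Ring R] {p : R[X]} (hp : 1 < p.natDegree) (c : R) :
    (p - C c).nextCoeff = p.nextCoeff := by
  rw [nextCoeff_of_natDegree_pos (by rw [natDegree_sub_C]; omega), natDegree_sub_C,
    nextCoeff_of_natDegree_pos (by omega), coeff_sub, coeff_C_of_ne_zero (by omega), sub_zero]

theorem exists_monic_comp_eq {K : Type*} [Field K] (g h : K[X]) (hh : h ≠ 0) :
    ∃ G H : K[X], H.Monic ∧ G.natDegree = g.natDegree ∧ H.natDegree = h.natDegree ∧
      G.comp H = g.comp h := by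
  have hc : h.leadingCoeff ≠ 0 := leadingCoeff_ne_zero.mpr hh
  refine ⟨g.comp (C h.leadingCoeff * X), C h.leadingCoeff⁻¹ * h,
    monic_C_mul_of_mul_leadingCoeff_eq_one (inv_mul_cancel₀ hc), ?_,
    natDegree_C_mul (inv_ne_zero hc), ?_⟩
  · rw [natDegree_comp, natDegree_C_mul_X _ hc, mul_one]
  · rw [comp_assoc, mul_comp, C_comp, X_comp, ← mul_assoc, ← C_mul, mul_inv_cancel₀ hc, C_1,
      one_mul]

theorem Splits.isIntegral_smul_nextCoeff {R K : Type*} [CommRing R] [Field K] [Algebra R K]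
    {P : K[X]} (hP : P.Splits) (hm : P.Monic) {c : R}
    (hroots : ∀ α ∈ P.roots, IsIntegral R (c • α)) : IsIntegral R (c • P.nextCoeff) := by
  rw [hP.nextCoeff_eq_neg_sum_roots_of_monic hm, smul_neg, Multiset.smul_sum]
  refine IsIntegral.neg (Subalgebra.multiset_sum_mem (integralClosure R K) fun x hx => ?_)
  obtain ⟨α, hα, rfl⟩ := Multiset.mem_map.mp hx
  exact hroots α hα

end Polynomial

theorem Int.dvd_of_isIntegral_of_intCast_eq_mul {K : Type*} [Field K] [CharZero K] {m a : ℤ}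
    {z : K} (hz : IsIntegral ℤ z) (ha : a ≠ 0) (h : (m : K) = a * z) : a ∣ m := by
  have hz' : z = algebraMap ℚ K (m / a) := by
    rw [map_div₀, map_intCast, map_intCast, h, mul_div_cancel_left₀ _ (Int.cast_ne_zero.mpr ha)]
  rw [hz', isIntegral_algebraMap_iff (algebraMap ℚ K).injective,
    IsIntegrallyClosed.isIntegral_iff] at hz
  obtain ⟨y, hy⟩ := hz
  refine ⟨y, ?_⟩
  rw [algebraMap_int_eq, eq_intCast, eq_div_iff (Int.cast_ne_zero.mpr ha)] at hy
  exact_mod_cast hy.symm.trans (mul_comm _ _)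

theorem natDegree_dvd_coeff_of_map_eq_comp {K : Type*} [Field K] [IsAlgClosed K] [CharZero K]
    {f : ℤ[X]} {G H : K[X]} (hH : H.Monic) (hG : 0 < G.natDegree) (hHdeg : 1 < H.natDegree)
    (hf : f.map (Int.castRingHom K) = G.comp H) :
    (G.natDegree : ℤ) ∣ f.coeff (G.natDegree * H.natDegree - 1) := by
  have hlead : G.leadingCoeff = f.leadingCoeff := by
    rw [← eq_intCast (Int.castRingHom K), ← leadingCoeff_map_of_injective
      (Int.castRingHom K).injective_int, hf,
      leadingCoeff_comp (by omega), hH.leadingCoeff, one_pow, mul_one]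
  have hcoeff : (f.coeff (G.natDegree * H.natDegree - 1) : K) =
      (G.natDegree : ℤ) * (f.leadingCoeff • H.nextCoeff) := by
    rw [← eq_intCast (Int.castRingHom K), ← coeff_map, hf,
      coeff_comp_natDegree_mul_sub_one hH hG hHdeg, hlead, zsmul_eq_mul]
    push_cast
    ring
  obtain ⟨β, hβ⟩ := IsAlgClosed.exists_root G (natDegree_pos_iff_degree_pos.mp hG).ne'
  have hint : IsIntegral ℤ (f.leadingCoeff • (H - C β).nextCoeff) := by
    refine (IsAlgClosed.splits _).isIntegral_smul_nextCoeff
      (hH.sub_of_left (degree_C_le.trans_lt ?_)) fun α hα => isIntegral_leadingCoeff_smul _ _ ?_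
    · rw [degree_eq_natDegree hH.ne_zero]
      exact_mod_cast (by omega : 0 < H.natDegree)
    · have hHα : H.eval α = β := sub_eq_zero.mp (by simpa using isRoot_of_mem_roots hα)
      rw [aeval_def, eval₂_eq_eval_map, algebraMap_int_eq, hf, eval_comp, hHα, hβ]
  rw [nextCoeff_sub_C hHdeg] at hint
  exact Int.dvd_of_isIntegral_of_intCast_eq_mul hint (by exact_mod_cast hG.ne') hcoeff

theorem indecomposable_of_gcd_subleading_coeff_general (f : ℤ[X]) (n : ℕ)
    (hdeg : f.natDegree = n)
    (hgcd : Nat.gcd (f.coeff (n - 1)).natAbs n = 1) :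
    ¬ ∃ g h : Polynomial ℂ, 1 < g.natDegree ∧ 1 < h.natDegree ∧
      f.map (Int.castRingHom ℂ) = g.comp h := by
  rintro ⟨g, h, hg, hh, hfgh⟩
  obtain ⟨G, H, hH, hGdeg, hHdeg, hGH⟩ :=
    exists_monic_comp_eq g h (by rintro rfl; simp at hh)
  have hn : G.natDegree * H.natDegree = n := by
    rw [← hdeg, ← natDegree_map_eq_of_injective (Int.castRingHom ℂ).injective_int, hfgh,
      ← hGH, natDegree_comp]
  have hdvd := natDegree_dvd_coeff_of_map_eq_comp hH (by omega) (by omega) (hfgh.trans hGH.symm)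
  rw [hn] at hdvd
  have : G.natDegree = 1 := Nat.dvd_one.mp <|
    hgcd ▸ Nat.dvd_gcd (Int.natAbs_dvd_natAbs.mpr hdvd) (Dvd.intro _ hn)
  omega

theorem indecomposable_of_gcd_subleading_coeff (f : ℤ[X]) (n : ℕ) (hn : 2 ≤ n)
    (hdeg : f.natDegree = n) (hlead : f.coeff n ≠ 0)
    (hgcd : Nat.gcd (f.coeff (n - 1)).natAbs n = 1) :
    ¬ ∃ g h : Polynomial ℂ, 1 < g.natDegree ∧ 1 < h.natDegree ∧
      f.map (Int.castRingHom ℂ) = g.comp h :=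
  indecomposable_of_gcd_subleading_coeff_general f n hdeg hgcd
end

section
/- Let f ∈ ℂ[x] and suppose f = g ∘ h with deg g ≥ 2. Then there exists γ ∈ ℂ such that deg gcd(f(x) − γ, f'(x)) ≥ deg h. -/
open Polynomial

theorem exists_gamma_gcd_ge_deg_inner (f g h : Polynomial ℂ)
    (hcomp : f = g.comp h) (hdg : 2 ≤ g.natDegree) :
    ∃ γ : ℂ, h.natDegree ≤
      (EuclideanDomain.gcd (f - C γ) (derivative f)).natDegree := by
  rcases Nat.eq_zero_or_pos h.natDegree with hh | hh
  · exact ⟨0, hh ▸ Nat.zero_le _⟩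
  -- g' has positive degree, get a root β
  have hgne : g.natDegree ≠ 0 := by omega
  have hderpos : 0 < (derivative g).degree := by
    rw [degree_derivative_eq g (by omega : 0 < g.natDegree)]
    exact_mod_cast by omega
  obtain ⟨β, hβ⟩ := Complex.exists_root hderpos
  refine ⟨g.eval β, ?_⟩
  have hdvd1 : (X - C β) ∣ (g - C (g.eval β)) := by
    rw [dvd_iff_isRoot]; simp [IsRoot]
  have hdvd2 : (X - C β) ∣ derivative g := by
    rw [dvd_iff_isRoot]; exact hβ
  have hcompdvd : ∀ p q : Polynomial ℂ, p ∣ q → p.comp h ∣ q.comp h := by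
    intro p q ⟨r, hr⟩
    exact ⟨r.comp h, by rw [hr, mul_comp]⟩
  have e1 : (X - C β).comp h = h - C β := by simp
  have d1 : (h - C β) ∣ (f - C (g.eval β)) := by
    have := hcompdvd _ _ hdvd1
    rwa [e1, sub_comp, C_comp, ← hcomp] at this
  have d2 : (h - C β) ∣ derivative f := by
    have := hcompdvd _ _ hdvd2
    rw [e1] at this
    rw [hcomp, derivative_comp]
    exact Dvd.dvd.mul_left this _
  have dg : (h - C β) ∣ EuclideanDomain.gcd (f - C (g.eval β)) (derivative f) :=
    EuclideanDomain.dvd_gcd d1 d2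
  have hfne : f - C (g.eval β) ≠ 0 := by
    intro h0
    have hf : f = C (g.eval β) := by linear_combination (norm := ring_nf) h0
    have : f.natDegree = 0 := by rw [hf]; simp
    rw [hcomp, natDegree_comp] at this
    have : g.natDegree * h.natDegree ≠ 0 := Nat.mul_ne_zero hgne (by omega)
    omega
  have hgcdne : EuclideanDomain.gcd (f - C (g.eval β)) (derivative f) ≠ 0 := by
    intro h0
    exact hfne ((EuclideanDomain.gcd_eq_zero_iff.mp h0)).1
  have := natDegree_le_of_dvd dg hgcdne
  have hdegsub : (h - C β).natDegree = h.natDegree := by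
    rw [natDegree_sub_C]
  omega
end

section
/- Let f ∈ ℂ[x] with deg f > 1. If for every γ ∈ ℂ one has deg gcd(f(x) − γ, f'(x)) ≤ 1, then f is indecomposable over ℂ. -/
open Polynomial

theorem indecomposable_of_gcd_le_one (f : Polynomial ℂ) (hf : 1 < f.natDegree)
    (hδ : ∀ γ : ℂ, (EuclideanDomain.gcd (f - C γ) (derivative f)).natDegree ≤ 1) :
    ¬ ∃ g h : Polynomial ℂ, 1 < g.natDegree ∧ 1 < h.natDegree ∧ f = g.comp h := by
  rintro ⟨g, h, hg, hh, rfl⟩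
  -- find a root β of g'
  have hg0 : g.natDegree ≠ 0 := by omega
  have hgd' : 0 < (derivative g).degree := by
    rw [Polynomial.degree_derivative_eq g (by omega)]
    exact_mod_cast Nat.sub_pos_of_lt hg
  obtain ⟨β, hβ⟩ := Complex.exists_root hgd'
  set γ := g.eval β with hγdef
  have hdvd1 : (X - C β) ∣ (g - C γ) := by
    rw [Polynomial.dvd_iff_isRoot]
    simp [Polynomial.IsRoot, hγdef]
  have hdvd2 : (X - C β) ∣ derivative g := by
    rw [Polynomial.dvd_iff_isRoot]
    exact hβ
  have hcomp1 : (h - C β) ∣ (g.comp h - C γ) := by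
    obtain ⟨q, hq⟩ := hdvd1
    refine ⟨q.comp h, ?_⟩
    have := congrArg (fun p => Polynomial.comp p h) hq
    simpa using this
  have hcomp2 : (h - C β) ∣ derivative (g.comp h) := by
    rw [Polynomial.derivative_comp]
    obtain ⟨q, hq⟩ := hdvd2
    have h2 : (h - C β) ∣ (derivative g).comp h := by
      refine ⟨q.comp h, ?_⟩
      have := congrArg (fun p => Polynomial.comp p h) hq
      simpa using this
    exact h2.mul_left _
  have hgcd : (h - C β) ∣ EuclideanDomain.gcd (g.comp h - C γ) (derivative (g.comp h)) :=
    EuclideanDomain.dvd_gcd hcomp1 hcomp2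
  have hne : g.comp h - C γ ≠ 0 := by
    intro h0
    have := congrArg Polynomial.natDegree h0
    rw [Polynomial.natDegree_sub_C] at this
    simp at this
    omega
  have hgcdne : EuclideanDomain.gcd (g.comp h - C γ) (derivative (g.comp h)) ≠ 0 := by
    intro h0
    exact hne (EuclideanDomain.gcd_eq_zero_iff.mp h0).1
  have hle := Polynomial.natDegree_le_of_dvd hgcd hgcdne
  rw [Polynomial.natDegree_sub_C] at hle
  have := hδ γ
  omega
end

section
/- (Hajós's lemma) Let K be a field of characteristic 0 and g ∈ K[x] with deg g ≥ 1. If g has a zero β ≠ 0 (in an algebraic closure of K) of multiplicity m, then g has at least m + 1 nonzero terms. -/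
/-!
Dividing out the largest power of `X` changes neither the number of terms nor the multiplicity of
the nonzero root `β`, and leaves a nonzero constant term. Differentiating then kills that constant
term, so it loses at least one term, while in characteristic zero it lowers the multiplicity of
`β` by exactly one. Induction on the multiplicity gives the bound.
-/

open Polynomial Finset

namespace Polynomial

variable {R : Type*}

theorem card_support_X_pow_mul [Semiring R] (k : ℕ) (p : R[X]) :
    #(X ^ k * p).support = #p.support := by
  have : (X ^ k * p).support = p.support.image (· + k) := by
    ext n
    simp only [mem_support_iff, mem_image, coeff_X_pow_mul']
    constructor
    · intro h
      split_ifs at h with hk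
      · exact ⟨n - k, h, by omega⟩
      · exact absurd rfl h
    · rintro ⟨d, hd, rfl⟩
      simpa using hd
  rw [this, card_image_of_injective _ (add_left_injective k)]

theorem card_support_derivative_lt [Semiring R] {p : R[X]} (hp : p.coeff 0 ≠ 0) :
    #(derivative p).support < #p.support := by
  have hshift : #(derivative p).support ≤ #(p.support.erase 0) := by
    refine card_le_card_of_injOn (· + 1) (fun n hn => ?_) (fun a _ b _ hab => by simpa using hab)
    rw [mem_coe, mem_support_iff, coeff_derivative] at hn
    have : p.coeff (n + 1) ≠ 0 := fun h => hn (by simp [h])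
    simp [mem_support_iff, this]
  have h0 : 0 ∈ p.support := mem_support_iff.mpr hp
  rw [card_erase_of_mem h0] at hshift
  have := card_pos.mpr ⟨0, h0⟩
  omega

theorem exists_eq_X_pow_mul_coeff_zero_ne_zero [Ring R] {p : R[X]} (hp : p ≠ 0) :
    ∃ k q, p = X ^ k * q ∧ q.coeff 0 ≠ 0 := by
  obtain ⟨q, hpq, hq⟩ := exists_eq_pow_rootMultiplicity_mul_and_not_dvd p hp 0
  rw [C_0, sub_zero] at hpq hq
  exact ⟨_, q, hpq, mt X_dvd_iff.mpr hq⟩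

theorem rootMultiplicity_X_pow_mul [CommRing R] [IsDomain R] {β : R} (hβ : β ≠ 0) (k : ℕ)
    (p : R[X]) : (X ^ k * p).rootMultiplicity β = p.rootMultiplicity β := by
  rcases eq_or_ne p 0 with rfl | hp
  · rw [mul_zero]
  have hX : (X ^ k : R[X]).rootMultiplicity β = 0 :=
    rootMultiplicity_eq_zero (by simpa [IsRoot] using pow_ne_zero k hβ)
  rw [rootMultiplicity_mul (mul_ne_zero (pow_ne_zero k X_ne_zero) hp), hX, zero_add]

theorem rootMultiplicity_lt_card_support [CommRing R] [IsDomain R] [CharZero R] {p : R[X]}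
    (hp : p ≠ 0) {β : R} (hβ : β ≠ 0) : p.rootMultiplicity β < #p.support := by
  suffices ∀ m : ℕ, ∀ p : R[X], p ≠ 0 → m ≤ p.rootMultiplicity β → m < #p.support from
    this _ p hp le_rfl
  intro m
  induction m with
  | zero => exact fun p hp _ => card_pos.mpr (support_nonempty.mpr hp)
  | succ m ih =>
    intro p hp hm
    obtain ⟨k, q, rfl, hq⟩ := exists_eq_X_pow_mul_coeff_zero_ne_zero hp
    rw [rootMultiplicity_X_pow_mul hβ] at hm
    rw [card_support_X_pow_mul]
    have hq' : derivative q ≠ 0 := by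
      intro h
      rw [eq_C_of_natDegree_eq_zero (derivative_eq_zero.mp h),
        rootMultiplicity_C] at hm
      omega
    have hmq' : m ≤ (derivative q).rootMultiplicity β := by
      have := rootMultiplicity_sub_one_le_derivative_rootMultiplicity q β
      omega
    calc m + 1 < #(derivative q).support + 1 := by simpa using ih _ hq' hmq'
      _ ≤ #q.support := card_support_derivative_lt hq

end Polynomial

/-- Hajós's lemma. -/
theorem hajos_lemma {K : Type*} [Field K] [CharZero K] (g : K[X])
    (hg : 1 ≤ g.natDegree) (β : AlgebraicClosure K) (hβ : β ≠ 0) (m : ℕ)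
    (hm : (g.map (algebraMap K (AlgebraicClosure K))).rootMultiplicity β = m) :
    m + 1 ≤ g.support.card := by
  have hg0 : g ≠ 0 := ne_zero_of_natDegree_gt hg
  rw [← hm, ← support_map_of_injective g (algebraMap K (AlgebraicClosure K)).injective]
  exact rootMultiplicity_lt_card_support (map_ne_zero hg0) hβ
end

section
/- Let K be a field of characteristic 0, and let f(x) = a₁x^{n₁} + a₂x^{n₂} + a₃ with a₁a₂ ≠ 0 and n₁ > n₂ ≥ 1. Suppose f = g ∘ h with g, h ∈ K[x], deg g ≥ 2, deg h ≥ 2, h monic and h(0) = 0. Then h(x) = x^k for some k dividing gcd(n₁, n₂), and g(x) = a₁x^{n₁/k} + a₂x^{n₂/k} + a₃. -/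
open Polynomial

private lemma aux_coprime {K : Type*} [Field K] {u : K[X]} (hu : u.coeff 0 ≠ 0) :
    IsCoprime (X : K[X]) u := by
  have hX : (X : K[X]) ∣ (u - C (u.coeff 0)) := by
    rw [X_dvd_iff]; simp
  obtain ⟨t, ht⟩ := hX
  refine ⟨-C (u.coeff 0)⁻¹ * t, C (u.coeff 0)⁻¹, ?_⟩
  have h2 : -C (u.coeff 0)⁻¹ * t * X + C (u.coeff 0)⁻¹ * u
      = C (u.coeff 0)⁻¹ * (u - X * t) := by ring
  rw [h2, ← ht, sub_sub_cancel, ← C_mul, inv_mul_cancel₀ hu, C_1]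

private lemma aux_val {K : Type*} [Field K] {P Q : K[X]} {a b : ℕ}
    (hP : P.coeff 0 ≠ 0) (hQ : Q.coeff 0 ≠ 0) (hEq : X ^ a * P = X ^ b * Q) : a = b := by
  have hP0 : P ≠ 0 := fun h => hP (by simp [h])
  have hQ0 : Q ≠ 0 := fun h => hQ (by simp [h])
  have hXa : (X : K[X]) ^ a * P ≠ 0 := mul_ne_zero (pow_ne_zero _ X_ne_zero) hP0
  have hXb : (X : K[X]) ^ b * Q ≠ 0 := mul_ne_zero (pow_ne_zero _ X_ne_zero) hQ0
  have key : ∀ (c : ℕ) (R : K[X]), R.coeff 0 ≠ 0 → (X ^ c * R ≠ 0) →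
      rootMultiplicity 0 (X ^ c * R) = c := by
    intro c R hR hne
    rw [rootMultiplicity_mul hne]
    have h1 : rootMultiplicity (0 : K) (X ^ c) = c := by
      have h0 : (X : K[X]) ^ c = (X - C 0) ^ c := by simp
      rw [h0, rootMultiplicity_X_sub_C_pow]
    have h2 : rootMultiplicity (0 : K) R = 0 := by
      apply rootMultiplicity_eq_zero
      rw [IsRoot, ← coeff_zero_eq_eval_zero]
      exact hR
    rw [h1, h2]
    omega
  rw [← key a P hP hXa, hEq, key b Q hQ hXb]

private lemma aux_binom {K : Type*} [Field K] (g : K[X]) {m : ℕ}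
    (hgm : g.natDegree = m + 1) (e : K) (n₂ d : ℕ) (hn₂ : 1 ≤ n₂) (hd : 1 ≤ d) :
    (g.comp (X ^ (n₂ + d) + C e * X ^ n₂)).coeff (n₂ * (m + 1) + d * m) =
      g.leadingCoeff * (((m + 1 : ℕ) : K) * e) := by
  set k := n₂ + d with hk
  set T := n₂ * (m + 1) + d * m with hT
  set h : K[X] := X ^ k + C e * X ^ n₂ with hh
  have hhdeg : h.natDegree ≤ k := by
    apply (natDegree_add_le _ _).trans
    simp only [natDegree_X_pow, max_le_iff]
    exact ⟨le_rfl, (natDegree_C_mul_le _ _).trans (by simp [hk])⟩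
  have hpow : (h ^ (m + 1)).coeff T = ((m + 1 : ℕ) : K) * e := by
    rw [hh, add_pow, finset_sum_coeff]
    have hterm : ∀ i ∈ Finset.range (m + 1 + 1),
        (((X : K[X]) ^ k) ^ i * (C e * X ^ n₂) ^ (m + 1 - i) * ((m+1).choose i : K[X])).coeff T
        = if T = n₂ * (m + 1) + d * i then e ^ (m + 1 - i) * (((m+1).choose i : ℕ) : K)
          else 0 := by
      intro i hi
      have hi' : i ≤ m + 1 := by simp only [Finset.mem_range] at hi; omega
      have hexp : k * i + n₂ * (m + 1 - i) = n₂ * (m + 1) + d * i := by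
        have h2 : n₂ * i + n₂ * (m + 1 - i) = n₂ * (m + 1) := by
          rw [← Nat.mul_add, Nat.add_sub_cancel' hi']
        calc k * i + n₂ * (m + 1 - i) = n₂ * i + n₂ * (m + 1 - i) + d * i := by rw [hk]; ring
          _ = n₂ * (m + 1) + d * i := by rw [h2]
      have e1 : ((X : K[X]) ^ k) ^ i * (C e * X ^ n₂) ^ (m + 1 - i) * ((m+1).choose i : K[X])
          = C (e ^ (m+1-i) * (((m+1).choose i : ℕ) : K)) * X ^ (n₂ * (m+1) + d * i) := by
        rw [← hexp, mul_pow, ← pow_mul, ← pow_mul, ← C_pow, ← C_eq_natCast, C_mul, pow_add]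
        ring
      rw [e1, coeff_C_mul, coeff_X_pow]
      split_ifs with hc
      · ring
      · ring
    rw [Finset.sum_congr rfl hterm]
    rw [Finset.sum_eq_single_of_mem m (Finset.mem_range.mpr (by omega))]
    · rw [if_pos hT, show m + 1 - m = 1 by omega, pow_one, Nat.choose_succ_self_right]
      ring
    · intro i hi hne
      rw [if_neg]
      intro hcon
      rw [hT] at hcon
      exact hne (Nat.eq_of_mul_eq_mul_left hd (Nat.add_left_cancel hcon)).symm
  rw [comp_eq_sum_left, g.sum_over_range (f := fun n a => C a * h ^ n) (by simp), hgm,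
    finset_sum_coeff]
  rw [Finset.sum_eq_single_of_mem (m + 1) (Finset.mem_range.mpr (by omega))]
  · rw [coeff_C_mul, hpow, leadingCoeff, hgm]
  · intro j hj hne
    have hj' : j ≤ m := by simp only [Finset.mem_range] at hj; omega
    rw [coeff_C_mul]
    refine mul_eq_zero_of_right _ (coeff_eq_zero_of_natDegree_lt ?_)
    calc (h ^ j).natDegree ≤ j * h.natDegree := natDegree_pow_le
      _ ≤ m * k := Nat.mul_le_mul hj' hhdeg
      _ < T := by rw [hT, hk]; nlinarith [hn₂, hd]

theorem trinomial_decomposition {K : Type*} [Field K] [CharZero K]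
    (a₁ a₂ a₃ : K) (ha₁ : a₁ ≠ 0) (ha₂ : a₂ ≠ 0)
    (n₁ n₂ : ℕ) (hn₂ : 1 ≤ n₂) (hn : n₂ < n₁)
    (g h : K[X]) (hdg : 2 ≤ g.natDegree) (hdh : 2 ≤ h.natDegree)
    (hh : h.Monic) (hh0 : h.eval 0 = 0)
    (hcomp : C a₁ * X ^ n₁ + C a₂ * X ^ n₂ + C a₃ = g.comp h) :
    ∃ k : ℕ, k ∣ Nat.gcd n₁ n₂ ∧ h = X ^ k ∧
      g = C a₁ * X ^ (n₁ / k) + C a₂ * X ^ (n₂ / k) + C a₃ := by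
  classical
  have hn₁ : 1 ≤ n₁ := by omega
  obtain ⟨m, hmdef⟩ : ∃ m, g.natDegree = m := ⟨_, rfl⟩
  obtain ⟨k, hkdef⟩ : ∃ k, h.natDegree = k := ⟨_, rfl⟩
  have hm2 : 2 ≤ m := hmdef ▸ hdg
  have hk2 : 2 ≤ k := hkdef ▸ hdh
  have hhne : h ≠ 0 := hh.ne_zero
  -- degree of f
  have hfdeg : (C a₁ * X ^ n₁ + C a₂ * X ^ n₂ + C a₃).natDegree = n₁ := by
    have hd1 : (C a₁ * X ^ n₁ : K[X]).degree = n₁ := degree_C_mul_X_pow n₁ ha₁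
    have hd2 : (C a₂ * X ^ n₂ + C a₃ : K[X]).degree < (n₁ : WithBot ℕ) := by
      apply lt_of_le_of_lt (degree_add_le _ _)
      rw [max_lt_iff]
      constructor
      · exact lt_of_le_of_lt (degree_C_mul_X_pow_le _ _) (by exact_mod_cast hn)
      · exact lt_of_le_of_lt degree_C_le (by exact_mod_cast hn₁)
    have h3 : (C a₁ * X ^ n₁ + (C a₂ * X ^ n₂ + C a₃) : K[X]).degree = n₁ := by
      rw [degree_add_eq_left_of_degree_lt]
      · exact hd1
      · rw [hd1]; exact hd2
    rw [add_assoc]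
    exact natDegree_eq_of_degree_eq_some h3
  have hn1mk : n₁ = m * k := by
    rw [← hfdeg, hcomp, natDegree_comp, hmdef, hkdef]
  -- leading coefficient of g
  have hlc : g.leadingCoeff = a₁ := by
    have h1 : (C a₁ * X ^ n₁ + C a₂ * X ^ n₂ + C a₃).leadingCoeff = a₁ := by
      rw [leadingCoeff, hfdeg]
      rw [coeff_add, coeff_add, coeff_C_mul, coeff_C_mul, coeff_X_pow, coeff_X_pow, coeff_C,
        if_pos rfl, if_neg (by omega : ¬ n₁ = n₂), if_neg (by omega : ¬ n₁ = 0)]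
      ring
    rw [hcomp, leadingCoeff_comp (by rw [hkdef]; omega), hh.leadingCoeff, one_pow,
      mul_one] at h1
    exact h1
  -- g eval 0 = a₃
  have hg0 : g.eval 0 = a₃ := by
    have h1 := congrArg (eval 0) hcomp
    simp only [eval_add, eval_mul, eval_C, eval_pow, eval_X, eval_comp, hh0] at h1
    rw [zero_pow (by omega : n₁ ≠ 0), zero_pow (by omega : n₂ ≠ 0)] at h1
    simpa using h1.symm
  set G := g - C a₃ with hGdef
  have hGdeg : G.natDegree = m := by rw [hGdef, natDegree_sub_C, hmdef]
  have hGne : G ≠ 0 := by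
    intro h0
    rw [h0, natDegree_zero] at hGdeg
    omega
  have hGcomp : G.comp h = C a₁ * X ^ n₁ + C a₂ * X ^ n₂ := by
    rw [hGdef, sub_comp, C_comp, ← hcomp]; ring
  -- factor out X from h
  obtain ⟨u, hu', hund⟩ := h.exists_eq_pow_rootMultiplicity_mul_and_not_dvd hhne 0
  rw [C_0, sub_zero] at hu' hund
  rw [X_dvd_iff] at hund
  have hu0 : u.coeff 0 ≠ 0 := hund
  have hune : u ≠ 0 := fun h0 => hu0 (by simp [h0])
  obtain ⟨s, hs1, hu⟩ : ∃ s : ℕ, 1 ≤ s ∧ h = X ^ s * u :=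
    ⟨rootMultiplicity 0 h, (rootMultiplicity_pos hhne).mpr (by rwa [IsRoot]), hu'⟩
  have humonic : u.Monic := by
    have h1 := hh
    rw [Monic, hu, leadingCoeff_mul, leadingCoeff_X_pow, one_mul] at h1
    exact h1
  obtain ⟨d, hddef⟩ : ∃ d, u.natDegree = d := ⟨_, rfl⟩
  have hucd : u.coeff d = 1 := by rw [← hddef]; exact humonic.coeff_natDegree
  have hkd : k = s + d := by
    rw [← hkdef, hu, natDegree_mul (pow_ne_zero _ X_ne_zero) hune, natDegree_X_pow, hddef]
  -- factor out X from G
  obtain ⟨v, hv', hvnd⟩ := G.exists_eq_pow_rootMultiplicity_mul_and_not_dvd hGne 0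
  rw [C_0, sub_zero] at hv' hvnd
  rw [X_dvd_iff] at hvnd
  have hv0 : v.coeff 0 ≠ 0 := hvnd
  have hGroot : G.IsRoot 0 := by
    rw [IsRoot, hGdef]
    simp [hg0]
  obtain ⟨r, hr1, hv⟩ : ∃ r : ℕ, 1 ≤ r ∧ G = X ^ r * v :=
    ⟨rootMultiplicity 0 G, (rootMultiplicity_pos hGne).mpr hGroot, hv'⟩
  -- s * r = n₂
  have hrs : s * r = n₂ := by
    have hfact : G.comp h = X ^ (s * r) * (u ^ r * v.comp h) := by
      rw [hv, mul_comp, X_pow_comp, hu, mul_pow, ← pow_mul]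
      ring
    have hfact2 : G.comp h = X ^ n₂ * (C a₁ * X ^ (n₁ - n₂) + C a₂) := by
      rw [hGcomp]
      rw [show (X:K[X]) ^ n₂ * (C a₁ * X ^ (n₁ - n₂) + C a₂)
          = C a₁ * (X ^ n₂ * X ^ (n₁-n₂)) + C a₂ * X ^ n₂ by ring, ← pow_add,
        Nat.add_sub_cancel' hn.le]
    apply aux_val (P := u ^ r * v.comp h) (Q := C a₁ * X ^ (n₁ - n₂) + C a₂)
    · rw [coeff_zero_eq_eval_zero]
      simp only [eval_mul, eval_pow, eval_comp, hh0]
      rw [← coeff_zero_eq_eval_zero, ← coeff_zero_eq_eval_zero]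
      exact mul_ne_zero (pow_ne_zero _ hu0) hv0
    · rw [coeff_zero_eq_eval_zero]
      simp only [eval_add, eval_mul, eval_C, eval_pow, eval_X]
      rw [zero_pow (by omega : n₁ - n₂ ≠ 0), mul_zero, zero_add]
      exact ha₂
    · rw [← hfact, hfact2]
  -- the key differential identity
  set c₂ := a₂ * ((n₁ : K) - (n₂ : K)) with hc₂def
  have hc₂ : c₂ ≠ 0 := by
    apply mul_ne_zero ha₂
    rw [sub_ne_zero]
    intro hcon
    exact (by omega : n₁ ≠ n₂) (Nat.cast_injective hcon)
  have hkey : C ((n₁ : K)) * (G.comp h) - X * ((derivative G).comp h * derivative h)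
      = C c₂ * X ^ n₂ := by
    rw [show X * ((derivative G).comp h * derivative h) = X * derivative (G.comp h) by
      rw [derivative_comp]; ring]
    rw [hGcomp]
    rw [show derivative (C a₁ * X ^ n₁ + C a₂ * X ^ n₂)
        = C a₁ * (C ((n₁ : K)) * X ^ (n₁ - 1)) + C a₂ * (C ((n₂ : K)) * X ^ (n₂ - 1)) by
      rw [derivative_add, derivative_C_mul, derivative_C_mul, derivative_X_pow,
        derivative_X_pow]]
    rw [show (X : K[X]) * (C a₁ * (C ((n₁:K)) * X ^ (n₁-1)) + C a₂ * (C ((n₂:K)) * X ^ (n₂-1)))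
        = C a₁ * C ((n₁:K)) * X ^ n₁ + C a₂ * C ((n₂:K)) * X ^ n₂ by
      rw [mul_add]
      congr 1
      · rw [show (X:K[X]) * (C a₁ * (C ((n₁:K)) * X ^ (n₁-1)))
            = C a₁ * C ((n₁:K)) * (X * X ^ (n₁-1)) by ring, ← pow_succ',
          Nat.sub_add_cancel hn₁]
      · rw [show (X:K[X]) * (C a₂ * (C ((n₂:K)) * X ^ (n₂-1)))
            = C a₂ * C ((n₂:K)) * (X * X ^ (n₂-1)) by ring, ← pow_succ',
          Nat.sub_add_cancel hn₂]]
    rw [hc₂def, C_mul, C_sub]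
    ring
  -- divisibility setup
  set b := (derivative G).coeff 0 with hbdef
  have hudvdh : u ∣ h := ⟨X ^ s, by rw [hu]; ring⟩
  obtain ⟨t, ht⟩ : (X : K[X]) ∣ (derivative G - C b) := by
    rw [X_dvd_iff]; simp [hbdef]
  have hDGcomp : (derivative G).comp h = C b + h * (t.comp h) := by
    have h1 : derivative G = C b + X * t := by linear_combination ht
    rw [h1, add_comp, C_comp, mul_comp, X_comp]
  obtain ⟨G₁, hG₁⟩ : (X : K[X]) ∣ G := by
    rw [X_dvd_iff, coeff_zero_eq_eval_zero]
    exact hGroot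
  have hG₁comp : G.comp h = h * G₁.comp h := by
    rw [hG₁, mul_comp, X_comp]
  have hdvd1 : u ∣ C c₂ * X ^ n₂ + C b * (X * derivative h) := by
    have e1 : C c₂ * X ^ n₂ + C b * (X * derivative h)
        = h * (C ((n₁:K)) * G₁.comp h - X * (t.comp h) * derivative h) := by
      rw [hG₁comp, hDGcomp] at hkey
      linear_combination -hkey
    rw [e1]
    exact hudvdh.mul_right _
  have hXh' : X * derivative h = C ((s:K)) * (X ^ s * u) + X ^ (s + 1) * derivative u := by
    rw [hu, derivative_mul, derivative_X_pow]
    rw [show (X:K[X]) * (C ((s:K)) * X ^ (s-1) * u + X ^ s * derivative u)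
        = C ((s:K)) * ((X * X ^ (s-1)) * u) + (X * X ^ s) * derivative u by ring]
    rw [← pow_succ', Nat.sub_add_cancel hs1, ← pow_succ']
  have hdvd2 : u ∣ C c₂ * X ^ n₂ + C b * (X ^ (s + 1) * derivative u) := by
    have e2 : C c₂ * X ^ n₂ + C b * (X ^ (s+1) * derivative u)
        = (C c₂ * X ^ n₂ + C b * (X * derivative h)) - u * ((C b * C ((s:K))) * X ^ s) := by
      rw [hXh']
      ring
    rw [e2]
    exact hdvd1.sub (dvd_mul_right u _)
  have hcopu : ∀ n : ℕ, IsCoprime u ((X : K[X]) ^ n) :=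
    fun n => ((aux_coprime hu0).symm).pow_right
  -- main case analysis: show u = 1
  have hu1 : u = 1 := by
    by_cases hbz : b = 0
    · rw [hbz] at hdvd2
      simp only [C_0, zero_mul, add_zero] at hdvd2
      have h2 : u ∣ C c₂ := by
        apply (hcopu n₂).dvd_of_dvd_mul_right
        exact hdvd2
      exact humonic.eq_one_of_isUnit (isUnit_of_dvd_unit h2 (isUnit_C.mpr hc₂.isUnit))
    · -- b ≠ 0 forces r = 1 hence s = n₂
      have hbG1 : b = G.coeff 1 := by
        rw [hbdef, coeff_derivative]
        simp
      have hr1' : r = 1 := by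
        by_contra hrne
        have hr2 : 2 ≤ r := by omega
        apply hbz
        rw [hbG1, hv, show r = (r - 2) + 2 by omega]
        rw [show (X:K[X]) ^ ((r-2)+2) * v = X * (X * (X ^ (r-2) * v)) by rw [pow_add]; ring]
        rw [show (1:ℕ) = 0 + 1 from rfl, coeff_X_mul, mul_coeff_zero]
        simp
      have hsn2' : s = n₂ := by
        rw [hr1', mul_one] at hrs
        exact hrs
      by_cases hd0 : d = 0
      · have hdeg0 : u.natDegree = 0 := by rw [hddef]; exact hd0
        have h1 : u.coeff 0 = 1 := hdeg0 ▸ humonic.coeff_natDegree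
        rw [eq_C_of_natDegree_eq_zero hdeg0, h1, C_1]
      · exfalso
        have hd1 : 1 ≤ d := by omega
        set w : K[X] := C c₂ + C b * (X * derivative u) with hwdef
        have hdvd3 : u ∣ w := by
          apply (hcopu n₂).dvd_of_dvd_mul_right
          rw [show w * X ^ n₂ = C c₂ * X ^ n₂ + C b * (X ^ (s+1) * derivative u) by
            rw [hwdef, hsn2', pow_succ]
            ring]
          exact hdvd2
        have hXu'coeff : ∀ j : ℕ, 1 ≤ j → (X * derivative u).coeff j = u.coeff j * (j : K) := by
          intro j hj
          rw [show j = (j - 1) + 1 by omega, coeff_X_mul, coeff_derivative]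
          rw [show j - 1 + 1 = j by omega]
          push_cast [Nat.cast_sub hj]
          ring
        have hwcoeff : ∀ j : ℕ, 1 ≤ j → w.coeff j = b * (u.coeff j * (j : K)) := by
          intro j hj
          rw [hwdef, coeff_add, coeff_C, if_neg (by omega : j ≠ 0), coeff_C_mul,
            hXu'coeff j hj]
          ring
        have hwd : w.coeff d = b * (d : K) := by
          rw [hwcoeff d hd1, hucd]
          ring
        have hwd0 : w.coeff d ≠ 0 := by
          rw [hwd]
          exact mul_ne_zero hbz (Nat.cast_ne_zero.mpr (by omega))
        have hwne : w ≠ 0 := fun h0 => hwd0 (by simp [h0])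
        have hwdeg : w.natDegree ≤ d := by
          rw [hwdef]
          apply (natDegree_add_le _ _).trans
          simp only [natDegree_C, max_le_iff]
          refine ⟨Nat.zero_le _, ?_⟩
          apply natDegree_mul_le.trans
          simp only [natDegree_C, zero_add]
          apply natDegree_mul_le.trans
          simp only [natDegree_X]
          have h5 := natDegree_derivative_le u
          rw [hddef] at h5
          omega
        obtain ⟨t₂, ht₂⟩ := hdvd3
        have ht₂ne : t₂ ≠ 0 := by
          intro h0
          rw [h0, mul_zero] at ht₂
          exact hwne ht₂
        have ht₂deg : t₂.natDegree = 0 := by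
          have h6 := natDegree_mul hune ht₂ne
          rw [← ht₂, hddef] at h6
          omega
        have ht₂C : t₂ = C (b * (d : K)) := by
          have h1 := eq_C_of_natDegree_eq_zero ht₂deg
          have h2 : w.coeff d = t₂.coeff 0 := by
            rw [ht₂, h1, mul_comm, coeff_C_mul, hucd, mul_one, coeff_C_zero]
          rw [h1, ← h2, hwd]
        have hcj : ∀ j : ℕ, 0 < j → j < d → u.coeff j = 0 := by
          intro j hj0 hjd
          have h1 : w.coeff j = b * (u.coeff j * (j : K)) := hwcoeff j hj0
          have h2 : w.coeff j = b * (d : K) * u.coeff j := by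
            rw [ht₂, ht₂C, mul_comm, coeff_C_mul]
          have h3 : u.coeff j * (b * ((j : K) - (d : K))) = 0 := by
            linear_combination h2 - h1
          have h4 : b * ((j : K) - (d : K)) ≠ 0 := by
            apply mul_ne_zero hbz
            rw [sub_ne_zero]
            intro hcon
            exact (by omega : j ≠ d) (Nat.cast_injective hcon)
          exact (mul_eq_zero.mp h3).resolve_right h4
        set e := u.coeff 0 with hedef
        have he0 : e ≠ 0 := hu0
        have hu_eq : u = X ^ d + C e := by
          ext j
          rw [coeff_add, coeff_X_pow, coeff_C]
          rcases eq_or_ne j d with rfl | hjd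
          · rw [if_pos rfl, if_neg (by omega : j ≠ 0), hucd]
            ring
          · rw [if_neg hjd]
            rcases eq_or_ne j 0 with rfl | hj0
            · rw [if_pos rfl, zero_add, hedef]
            · rw [if_neg hj0, add_zero]
              rcases lt_or_ge j d with hlt | hge
              · exact hcj j (by omega) hlt
              · exact coeff_eq_zero_of_natDegree_lt (by rw [hddef]; omega)
        -- contradiction via the coefficient at T
        obtain ⟨m', hm'⟩ : ∃ m', m = m' + 1 := ⟨m - 1, by omega⟩
        have hhform : h = X ^ (n₂ + d) + C e * X ^ n₂ := by
          rw [hu, hu_eq, hsn2', pow_add]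
          ring
        have hgm' : g.natDegree = m' + 1 := by rw [hmdef, hm']
        have hcontra := aux_binom g hgm' e n₂ d hn₂ hd1
        rw [← hhform, ← hcomp] at hcontra
        set T := n₂ * (m' + 1) + d * m' with hTdef
        have hn₁T : n₁ = T + d := by
          rw [hn1mk, hkd, hsn2', hm', hTdef]
          ring
        have hTn₂ : T = n₂ * m' + n₂ + d * m' := by rw [hTdef]; ring
        have hn₂m' : 1 ≤ n₂ * m' := Nat.one_le_iff_ne_zero.mpr
          (Nat.mul_ne_zero (by omega) (by omega))
        have hfT : (C a₁ * X ^ n₁ + C a₂ * X ^ n₂ + C a₃).coeff T = 0 := by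
          rw [coeff_add, coeff_add, coeff_C_mul, coeff_C_mul, coeff_X_pow, coeff_X_pow,
            coeff_C, if_neg (by omega : ¬ T = n₁), if_neg (by omega : ¬ T = n₂),
            if_neg (by omega : ¬ T = 0)]
          ring
        rw [hfT] at hcontra
        have hne0 : g.leadingCoeff * (((m' + 1 : ℕ) : K) * e) ≠ 0 := by
          rw [hlc]
          exact mul_ne_zero ha₁ (mul_ne_zero (Nat.cast_ne_zero.mpr (by omega)) he0)
        exact hne0 hcontra.symm
  -- now h = X ^ s
  have hhX : h = X ^ s := by rw [hu, hu1, mul_one]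
  have hks : k = s := by rw [← hkdef, hhX, natDegree_X_pow]
  have hsn₁ : s ∣ n₁ := ⟨m, by rw [hn1mk, hks]; ring⟩
  have hsn₂ : s ∣ n₂ := ⟨r, hrs.symm⟩
  refine ⟨s, Nat.dvd_gcd hsn₁ hsn₂, hhX, ?_⟩
  apply Polynomial.expand_injective (show 0 < s by omega)
  rw [expand_eq_comp_X_pow, expand_eq_comp_X_pow]
  conv_lhs => rw [← hhX, ← hcomp]
  rw [add_comp, add_comp, mul_comp, mul_comp, C_comp, C_comp, C_comp, pow_comp, pow_comp,
    X_comp, ← pow_mul, ← pow_mul, Nat.mul_div_cancel' hsn₁, Nat.mul_div_cancel' hsn₂]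
end

section
/- Let K be a field of characteristic 0, and let f(x) = a₁x^{n₁} + a₂x^{n₂} + a₃x^{n₃} + a₄ with a₁a₂a₃ ≠ 0, n₁ > n₂ > n₃ ≥ 1 and n₁ + n₃ > 2n₂. Suppose f = g ∘ h with g, h ∈ K[x], deg g ≥ 2, deg h ≥ 2, h monic and h(0) = 0. Then h(x) = x^k for some k dividing gcd(n₁, n₂, n₃), and g(x) = a₁x^{n₁/k} + a₂x^{n₂/k} + a₃x^{n₃/k} + a₄. -/
/-!
Suppose `h ≠ X ^ k` and write `h = X ^ k + p` with `p ≠ 0`, `d = deg p < k`, `m = deg g ≥ 2`.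
Expanding `g ∘ h = lc(g) (X ^ k + p) ^ m + (terms of degree ≤ (m - 1) k)` shows that the
coefficient of `X ^ ((m - 1) k + d)` in `g ∘ h` is `m · lc(g) · lc(p) ≠ 0` (characteristic zero),
so this is a middle exponent: `(m - 1) k + d ≤ n₂`. At the other end, `h(0) = 0` makes the lowest
nonconstant term of `g ∘ h` have degree `ord(g - g(0)) · ord(h) ≤ m d`, so `n₃ ≤ m d`. Then
`m n₂ ≥ (m - 1) m k + m d ≥ (m - 1) n₁ + n₃`, contradicting `2 n₂ < n₁ + n₃` and `n₂ < n₁`.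
Hence `h = X ^ k`, `f = g(X ^ k)`, and `g` is read off the coefficients of `f`.
-/

open Polynomial Finset

namespace Polynomial

section Trailing

variable {R : Type*} [Semiring R] [NoZeroDivisors R]

theorem natTrailingDegree_pow (q : R[X]) (n : ℕ) :
    (q ^ n).natTrailingDegree = n * q.natTrailingDegree := by
  rcases eq_or_ne q 0 with rfl | hq
  · cases n <;> simp
  induction n with
  | zero => simp
  | succ n ih => rw [pow_succ, natTrailingDegree_mul (pow_ne_zero n hq) hq, ih, Nat.succ_mul]

theorem trailingCoeff_pow (q : R[X]) (n : ℕ) : (q ^ n).trailingCoeff = q.trailingCoeff ^ n := by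
  induction n with
  | zero => simp [trailingCoeff]
  | succ n ih => rw [pow_succ, trailingCoeff_mul, ih, pow_succ]

theorem coeff_comp_natTrailingDegree_mul {p q : R[X]} (hq : q ≠ 0) (hq0 : q.coeff 0 = 0) :
    (p.comp q).coeff (p.natTrailingDegree * q.natTrailingDegree) =
      p.trailingCoeff * q.trailingCoeff ^ p.natTrailingDegree := by
  have hs : 0 < q.natTrailingDegree :=
    Nat.pos_of_ne_zero (natTrailingDegree_ne_zero.mpr ⟨hq, hq0⟩)
  rw [comp, eval₂_eq_sum_range, finsetSum_coeff, sum_eq_single p.natTrailingDegree]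
  · rw [coeff_C_mul, ← natTrailingDegree_pow, ← trailingCoeff_pow]
    rfl
  · intro i _ hi
    rcases lt_or_gt_of_ne hi with hlt | hgt
    · rw [coeff_eq_zero_of_lt_natTrailingDegree hlt, C_0, zero_mul, coeff_zero]
    · rw [coeff_C_mul, coeff_eq_zero_of_lt_natTrailingDegree (p := q ^ i), mul_zero]
      rw [natTrailingDegree_pow]
      exact Nat.mul_lt_mul_of_pos_right hgt hs
  · intro h
    exact absurd (Nat.lt_succ_of_le (natTrailingDegree_le_natDegree p)) (by simpa using h)

end Trailing

theorem coeff_comp_eq_leadingCoeff_mul_coeff_pow_s18 {R : Type*} [Semiring R] {p q : R[X]} {n : ℕ}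
    (hn : (p.natDegree - 1) * q.natDegree < n) :
    (p.comp q).coeff n = p.leadingCoeff * (q ^ p.natDegree).coeff n := by
  rw [comp, eval₂_eq_sum_range, sum_range_succ, coeff_add, finsetSum_coeff, coeff_C_mul,
    sum_eq_zero, zero_add, leadingCoeff]
  intro i hi
  rw [coeff_C_mul, coeff_eq_zero_of_natDegree_lt (p := q ^ i), mul_zero]
  have hi : i ≤ p.natDegree - 1 := by rw [mem_range] at hi; omega
  calc (q ^ i).natDegree ≤ i * q.natDegree := natDegree_pow_le
    _ ≤ (p.natDegree - 1) * q.natDegree := Nat.mul_le_mul_right _ hi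
    _ < n := hn

theorem coeff_X_pow_add_pow_succ {R : Type*} [CommSemiring R] {p : R[X]} {k : ℕ}
    (hp : p.natDegree < k) (n : ℕ) :
    ((X ^ k + p) ^ (n + 1)).coeff (n * k + p.natDegree) = (n + 1) * p.leadingCoeff := by
  rw [add_pow, finsetSum_coeff, sum_eq_single n]
  · rw [Nat.add_sub_cancel_left, pow_one, Nat.choose_succ_self_right, ← pow_mul, ← C_eq_natCast,
      mul_comm, coeff_C_mul, mul_comm k, coeff_X_pow_mul', if_pos (by omega),
      Nat.add_sub_cancel_left, leadingCoeff]
    push_cast; ring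
  · intro i hi hin
    rw [mem_range] at hi
    rcases lt_or_gt_of_ne hin with hlt | hgt
    · apply coeff_eq_zero_of_natDegree_lt
      calc ((X ^ k) ^ i * p ^ (n + 1 - i) * ((n + 1).choose i : R[X])).natDegree
          ≤ i * k + (n + 1 - i) * p.natDegree := by
            refine (natDegree_mul_le_of_le (natDegree_mul_le_of_le ?_ natDegree_pow_le)
              (natDegree_natCast _).le).trans_eq (by rw [add_zero])
            rw [← pow_mul, mul_comm]
            exact natDegree_X_pow_le _
        _ < n * k + p.natDegree := by
            obtain ⟨j, rfl⟩ : ∃ j, n = i + j + 1 := ⟨n - i - 1, by omega⟩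
            rw [show i + j + 1 + 1 - i = j + 1 + 1 by omega]
            nlinarith
    · obtain rfl : i = n + 1 := by omega
      rw [Nat.sub_self, pow_zero, mul_one, Nat.choose_self, Nat.cast_one, mul_one, ← pow_mul,
        coeff_X_pow, if_neg (by nlinarith)]
  · intro h; simp at h

theorem dvd_of_coeff_expand_ne_zero {R : Type*} [CommSemiring R] {p : ℕ} (hp : 0 < p) {f : R[X]}
    {n : ℕ} (hn : (expand R p f).coeff n ≠ 0) : p ∣ n := by
  rw [coeff_expand hp] at hn
  exact of_not_not fun hpn => hn (if_neg hpn)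

section Quadrinomial

variable {R : Type*} [CommSemiring R] {a₁ a₂ a₃ a₄ : R} {n₁ n₂ n₃ : ℕ}

noncomputable def quadrinomial (a₁ a₂ a₃ a₄ : R) (n₁ n₂ n₃ : ℕ) : R[X] :=
  C a₁ * X ^ n₁ + C a₂ * X ^ n₂ + C a₃ * X ^ n₃ + C a₄

theorem coeff_quadrinomial (r : ℕ) :
    (quadrinomial a₁ a₂ a₃ a₄ n₁ n₂ n₃).coeff r =
      (if r = n₁ then a₁ else 0) + (if r = n₂ then a₂ else 0) + (if r = n₃ then a₃ else 0) +
        if r = 0 then a₄ else 0 := by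
  simp only [quadrinomial, coeff_add, coeff_C_mul_X_pow, coeff_C]

theorem coeff_quadrinomial_left (h₃₂ : n₃ < n₂) (h₂₁ : n₂ < n₁) :
    (quadrinomial a₁ a₂ a₃ a₄ n₁ n₂ n₃).coeff n₁ = a₁ := by
  rw [coeff_quadrinomial]
  simp [h₂₁.ne', (h₃₂.trans h₂₁).ne', Nat.ne_zero_of_lt h₂₁]

theorem coeff_quadrinomial_middle (h₃₂ : n₃ < n₂) (h₂₁ : n₂ < n₁) :
    (quadrinomial a₁ a₂ a₃ a₄ n₁ n₂ n₃).coeff n₂ = a₂ := by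
  rw [coeff_quadrinomial]
  simp [h₂₁.ne, h₃₂.ne', Nat.ne_zero_of_lt h₃₂]

theorem coeff_quadrinomial_right (hn₃ : n₃ ≠ 0) (h₃₂ : n₃ < n₂) (h₂₁ : n₂ < n₁) :
    (quadrinomial a₁ a₂ a₃ a₄ n₁ n₂ n₃).coeff n₃ = a₃ := by
  rw [coeff_quadrinomial]
  simp [(h₃₂.trans h₂₁).ne, h₃₂.ne, hn₃]

theorem natDegree_quadrinomial (ha₁ : a₁ ≠ 0) (h₃₂ : n₃ < n₂) (h₂₁ : n₂ < n₁) :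
    (quadrinomial a₁ a₂ a₃ a₄ n₁ n₂ n₃).natDegree = n₁ := by
  refine natDegree_eq_of_le_of_coeff_ne_zero ?_ (by rwa [coeff_quadrinomial_left h₃₂ h₂₁])
  refine natDegree_le_iff_coeff_eq_zero.mpr fun r hr => ?_
  rw [coeff_quadrinomial]
  simp [hr.ne', (h₂₁.trans hr).ne', (h₃₂.trans (h₂₁.trans hr)).ne', Nat.ne_zero_of_lt hr]

theorem eq_zero_or_mem_Icc_or_eq_of_coeff_quadrinomial_ne_zero (h₃₂ : n₃ ≤ n₂) {r : ℕ}
    (hr : (quadrinomial a₁ a₂ a₃ a₄ n₁ n₂ n₃).coeff r ≠ 0) :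
    r = 0 ∨ n₃ ≤ r ∧ r ≤ n₂ ∨ r = n₁ := by
  rw [coeff_quadrinomial] at hr
  split_ifs at hr <;> first | omega | simp at hr

theorem expand_quadrinomial {k : ℕ} (h₁ : k ∣ n₁) (h₂ : k ∣ n₂) (h₃ : k ∣ n₃) :
    expand R k (quadrinomial a₁ a₂ a₃ a₄ (n₁ / k) (n₂ / k) (n₃ / k)) =
      quadrinomial a₁ a₂ a₃ a₄ n₁ n₂ n₃ := by
  simp only [quadrinomial, map_add, map_mul, map_pow, expand_C, expand_X, ← pow_mul,
    Nat.mul_div_cancel' h₁, Nat.mul_div_cancel' h₂, Nat.mul_div_cancel' h₃]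

end Quadrinomial

section Domain

variable {R : Type*} [CommRing R] [IsDomain R] {g h : R[X]}

theorem exists_coeff_comp_ne_zero_le_natDegree_mul_natTrailingDegree (hg : 0 < g.natDegree)
    (hh : h ≠ 0) (hh0 : h.coeff 0 = 0) :
    ∃ r, 0 < r ∧ r ≤ g.natDegree * h.natTrailingDegree ∧ (g.comp h).coeff r ≠ 0 := by
  set G := g - C (g.coeff 0)
  have hG : G ≠ 0 := fun hG0 => by
    have := congrArg natDegree hG0
    rw [natDegree_sub_C, natDegree_zero] at this
    omega
  have he : 0 < G.natTrailingDegree :=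
    Nat.pos_of_ne_zero (natTrailingDegree_ne_zero.mpr ⟨hG, by simp [G]⟩)
  have hs : 0 < h.natTrailingDegree :=
    Nat.pos_of_ne_zero (natTrailingDegree_ne_zero.mpr ⟨hh, hh0⟩)
  refine ⟨G.natTrailingDegree * h.natTrailingDegree, Nat.mul_pos he hs,
    Nat.mul_le_mul_right _ ((natTrailingDegree_le_natDegree G).trans natDegree_sub_C.le), ?_⟩
  have hcoeff := coeff_comp_natTrailingDegree_mul hh hh0 (p := G)
  rw [sub_comp, C_comp, coeff_sub, coeff_C, if_neg (Nat.mul_pos he hs).ne', sub_zero] at hcoeff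
  rw [hcoeff]
  exact mul_ne_zero (trailingCoeff_nonzero_iff_nonzero.mpr hG)
    (pow_ne_zero _ (trailingCoeff_nonzero_iff_nonzero.mpr hh))

theorem Monic.coeff_comp_natDegree_eraseLead_ne_zero [CharZero R] (hh : h.Monic)
    (hg : 0 < g.natDegree) (hd : 0 < h.eraseLead.natDegree) :
    (g.comp h).coeff ((g.natDegree - 1) * h.natDegree + h.eraseLead.natDegree) ≠ 0 := by
  have hp : h.eraseLead ≠ 0 := fun h0 => by simp [h0] at hd
  have hsplit : h = X ^ h.natDegree + h.eraseLead := by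
    simpa [hh.leadingCoeff, add_comm] using (eraseLead_add_C_mul_X_pow h).symm
  obtain ⟨n, hn⟩ : ∃ n, g.natDegree = n + 1 := ⟨g.natDegree - 1, by omega⟩
  have hpow := coeff_X_pow_add_pow_succ
    ((eraseLead_natDegree_lt_or_eraseLead_eq_zero h).resolve_right hp) n
  rw [← hsplit] at hpow
  rw [coeff_comp_eq_leadingCoeff_mul_coeff_pow_s18 (by omega), hn, Nat.add_sub_cancel, hpow]
  have hg0 : g ≠ 0 := fun h0 => by simp [h0] at hg
  exact mul_ne_zero (leadingCoeff_ne_zero.mpr hg0)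
    (mul_ne_zero (by exact_mod_cast n.succ_ne_zero) (leadingCoeff_ne_zero.mpr hp))

theorem Monic.eq_X_pow_of_comp_support_gap [CharZero R] {n₂ n₃ : ℕ} (hh : h.Monic)
    (hh0 : h.coeff 0 = 0) (hg : 2 ≤ g.natDegree)
    (hsupp : ∀ r, (g.comp h).coeff r ≠ 0 → r = 0 ∨ n₃ ≤ r ∧ r ≤ n₂ ∨ r = (g.comp h).natDegree)
    (hconv : 2 * n₂ < (g.comp h).natDegree + n₃) :
    h = X ^ h.natDegree := by
  by_contra hne
  rw [natDegree_comp] at hsupp hconv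
  set m := g.natDegree
  set k := h.natDegree
  set d := h.eraseLead.natDegree
  set s := h.natTrailingDegree
  have hp : h.eraseLead ≠ 0 := fun hp0 => hne <| by
    simpa [hp0, hh.leadingCoeff] using (eraseLead_add_C_mul_X_pow h).symm
  have hdk : d < k := (eraseLead_natDegree_lt_or_eraseLead_eq_zero h).resolve_right hp
  have hsd : s ≤ d := natTrailingDegree_le_of_ne_zero <| by
    rw [← eraseLead_coeff_of_ne d hdk.ne]
    exact leadingCoeff_ne_zero.mpr hp
  have hs : 0 < s := Nat.pos_of_ne_zero (natTrailingDegree_ne_zero.mpr ⟨hh.ne_zero, hh0⟩)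
  have hmk : m * k = (m - 1) * k + k := by
    rw [← Nat.succ_mul, Nat.succ_eq_add_one, Nat.sub_add_cancel (by omega)]
  have hmdk : m * d < m * k := Nat.mul_lt_mul_of_pos_left hdk (by omega)
  have hmid : n₃ ≤ (m - 1) * k + d ∧ (m - 1) * k + d ≤ n₂ := by
    have htop : (g.comp h).coeff ((m - 1) * k + d) ≠ 0 :=
      hh.coeff_comp_natDegree_eraseLead_ne_zero (by omega : 0 < m) (by omega : 0 < d)
    rcases hsupp _ htop with h0 | hmid | htop
    · omega
    · exact hmid
    · omega
  have hlow : n₃ ≤ m * d := by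
    obtain ⟨r, hr0, hr, hrc⟩ :=
      exists_coeff_comp_ne_zero_le_natDegree_mul_natTrailingDegree (by omega : 0 < m)
        hh.ne_zero hh0
    have hr' : r ≤ m * d := hr.trans (Nat.mul_le_mul_left _ hsd)
    rcases hsupp r hrc with h0 | hmid | hlead
    · omega
    · exact hmid.1.trans hr'
    · omega
  have hn₂ : n₂ < m * k := by omega
  nlinarith [Nat.mul_le_mul_left m hmid.2]

end Domain

end Polynomial

theorem quadrinomial_decomposition_general {K : Type*} [Field K] [CharZero K]
    (a₁ a₂ a₃ a₄ : K) (ha₁ : a₁ ≠ 0) (ha₂ : a₂ ≠ 0) (ha₃ : a₃ ≠ 0)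
    (n₁ n₂ n₃ : ℕ) (hn₃ : 1 ≤ n₃) (h₃₂ : n₃ < n₂) (h₂₁ : n₂ < n₁)
    (hconv : 2 * n₂ < n₁ + n₃)
    (g h : K[X]) (hdg : 2 ≤ g.natDegree)
    (hh : h.Monic) (hh0 : h.eval 0 = 0)
    (hcomp : C a₁ * X ^ n₁ + C a₂ * X ^ n₂ + C a₃ * X ^ n₃ + C a₄ = g.comp h) :
    ∃ k : ℕ, k ∣ Nat.gcd n₁ (Nat.gcd n₂ n₃) ∧ h = X ^ k ∧
      g = C a₁ * X ^ (n₁ / k) + C a₂ * X ^ (n₂ / k) + C a₃ * X ^ (n₃ / k) + C a₄ := by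
  change quadrinomial a₁ a₂ a₃ a₄ n₁ n₂ n₃ = g.comp h at hcomp
  have hdeg : (g.comp h).natDegree = n₁ := hcomp ▸ natDegree_quadrinomial ha₁ h₃₂ h₂₁
  have hX : h = X ^ h.natDegree :=
    hh.eq_X_pow_of_comp_support_gap (coeff_zero_eq_eval_zero h ▸ hh0) hdg
      (fun r hr =>
        hdeg ▸ eq_zero_or_mem_Icc_or_eq_of_coeff_quadrinomial_ne_zero h₃₂.le (hcomp ▸ hr))
      (by omega)
  have hk : 0 < h.natDegree := Nat.pos_of_ne_zero fun hk => by
    rw [hX, hk, pow_zero, eval_one] at hh0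
    exact one_ne_zero hh0
  have hexp : expand K h.natDegree g = quadrinomial a₁ a₂ a₃ a₄ n₁ n₂ n₃ := by
    rw [expand_eq_comp_X_pow, ← hX, hcomp]
  have hdvd {r : ℕ} {a : K} (ha : a ≠ 0)
      (hr : (quadrinomial a₁ a₂ a₃ a₄ n₁ n₂ n₃).coeff r = a) : h.natDegree ∣ r :=
    dvd_of_coeff_expand_ne_zero hk (hexp ▸ hr ▸ ha)
  have hd₁ := hdvd ha₁ (coeff_quadrinomial_left h₃₂ h₂₁)
  have hd₂ := hdvd ha₂ (coeff_quadrinomial_middle h₃₂ h₂₁)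
  have hd₃ := hdvd ha₃ (coeff_quadrinomial_right (by omega) h₃₂ h₂₁)
  refine ⟨h.natDegree, Nat.dvd_gcd hd₁ (Nat.dvd_gcd hd₂ hd₃), hX, expand_injective hk ?_⟩
  exact hexp.trans (expand_quadrinomial hd₁ hd₂ hd₃).symm

theorem quadrinomial_decomposition {K : Type*} [Field K] [CharZero K]
    (a₁ a₂ a₃ a₄ : K) (ha₁ : a₁ ≠ 0) (ha₂ : a₂ ≠ 0) (ha₃ : a₃ ≠ 0)
    (n₁ n₂ n₃ : ℕ) (hn₃ : 1 ≤ n₃) (h₃₂ : n₃ < n₂) (h₂₁ : n₂ < n₁)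
    (hconv : 2 * n₂ < n₁ + n₃)
    (g h : K[X]) (hdg : 2 ≤ g.natDegree) (hdh : 2 ≤ h.natDegree)
    (hh : h.Monic) (hh0 : h.eval 0 = 0)
    (hcomp : C a₁ * X ^ n₁ + C a₂ * X ^ n₂ + C a₃ * X ^ n₃ + C a₄ = g.comp h) :
    ∃ k : ℕ, k ∣ Nat.gcd n₁ (Nat.gcd n₂ n₃) ∧ h = X ^ k ∧
      g = C a₁ * X ^ (n₁ / k) + C a₂ * X ^ (n₂ / k) + C a₃ * X ^ (n₃ / k) + C a₄ :=
  quadrinomial_decomposition_general a₁ a₂ a₃ a₄ ha₁ ha₂ ha₃ n₁ n₂ n₃ hn₃ h₃₂ h₂₁ hconv g h hdg hh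
    hh0 hcomp
end
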